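/- arXiv:1404.0399 — 4 statements merged into one kernel-verified Lean document; each statement's English description precedes it below -/
import Mathlib

section
/- For every integer ν ≥ 1 and every real c > 0 there exists a real C > 0 such that the following holds for all reals L ≥ 3 and P ≥ 3. Let I(P) denote the set of primes p ∈ [P,2P] with p > 3 and p not dividing Δ_E. Suppose that for every squarefree odd integer r > 1 having at most ν prime factors, all of which lie in [L,2L], one has #{ p ∈ I(P) : r divides D_p } ≤ c·( P/(φ(r)·log P) + r³·P^{1/2}·log P ), where φ is Euler's totient function. Then Σ_{p ∈ I(P)} ω_L(D_p)^ν ≤ C·( P/(log L · log P) + L^{4ν}·P^{1/2}·(log P)/(log L)^ν ). -/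
/-!
Since `ω_L(d) ^ ν` counts the `ν`-tuples of primes in `[L, 2L]` dividing `d`, grouping
the tuples by their set of entries `S` gives
`ω_L(d) ^ ν ≤ ν ^ ν · #{S : 1 ≤ #S ≤ ν, ∏ S ∣ d}`.
Summing over `p` and exchanging the sums leaves the hypothesis applied to the squarefree
odd numbers `r = ∏ S`, for which `φ(r) ≥ (L - 1) ^ #S` and `r ≤ (2L) ^ ν`. By Chebyshev's
bound `∏_{ℓ ≤ x} ℓ ≤ 4 ^ x` there are `n ≤ 3L / log L` primes in `[L, 2L]`, so that,
summed over the `choose n k` sets of size `k`, the main terms contribute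
`≪ P / (log L log P)` and the error terms `≪ L ^ (4ν) √P log P / (log L) ^ ν`.
-/

open scoped Classical

noncomputable section

/-- Number of 𝔽_p-rational points of the reduction mod `p` of `W`, including the
point at infinity. -/
def Np (W : WeierstrassCurve ℤ) (p : ℕ) : ℕ :=
  1 + Nat.card {xy : ZMod p × ZMod p //
    (W.map (Int.castRingHom (ZMod p))).toAffine.Equation xy.1 xy.2}

/-- Trace of Frobenius `t_p = p + 1 - N_p`. -/
def tp (W : WeierstrassCurve ℤ) (p : ℕ) : ℤ := (p : ℤ) + 1 - Np W p

/-- Frobenius discriminant `D_p = t_p ^ 2 - 4 p`. -/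
def Dp (W : WeierstrassCurve ℤ) (p : ℕ) : ℤ := tp W p ^ 2 - 4 * p

/-- `ℓ` is an Elkies prime for `E_p`: an odd prime `ℓ ≠ p` such that `D_p` is
congruent to a square modulo `ℓ` (0 counted as a square). -/
def IsElkies (W : WeierstrassCurve ℤ) (p ℓ : ℕ) : Prop :=
  ℓ.Prime ∧ Odd ℓ ∧ ℓ ≠ p ∧ IsSquare ((Dp W p : ZMod ℓ))

/-- `ℓ` is an Atkin prime for `E_p`. -/
def IsAtkin (W : WeierstrassCurve ℤ) (p ℓ : ℕ) : Prop :=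
  ℓ.Prime ∧ Odd ℓ ∧ ℓ ≠ p ∧ ¬ IsSquare ((Dp W p : ZMod ℓ))

/-- `R_e(p; L)`: the number of Elkies primes in `[L, 2L]`. -/
def Re (W : WeierstrassCurve ℤ) (L : ℝ) (p : ℕ) : ℕ :=
  {ℓ : ℕ | L ≤ (ℓ : ℝ) ∧ (ℓ : ℝ) ≤ 2 * L ∧ IsElkies W p ℓ}.ncard

/-- `R_a(p; L)`: the number of Atkin primes in `[L, 2L]`. -/
def Ra (W : WeierstrassCurve ℤ) (L : ℝ) (p : ℕ) : ℕ :=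
  {ℓ : ℕ | L ≤ (ℓ : ℝ) ∧ (ℓ : ℝ) ≤ 2 * L ∧ IsAtkin W p ℓ}.ncard

/-- The prime counting function `π(z)` at a real argument. -/
def primePi (z : ℝ) : ℕ := {q : ℕ | q.Prime ∧ (q : ℝ) ≤ z}.ncard

/-- `ω_L(d)`: the number of primes `ℓ ∈ [L, 2L]` dividing `d`. -/
def omegaL (L : ℝ) (d : ℤ) : ℕ :=
  {ℓ : ℕ | ℓ.Prime ∧ L ≤ (ℓ : ℝ) ∧ (ℓ : ℝ) ≤ 2 * L ∧ (ℓ : ℤ) ∣ d}.ncard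

/-- The finset of odd primes `ℓ ∈ [L, 2L]` with `ℓ ≠ p`. -/
def oddPrimesBetween (L : ℝ) (p : ℕ) : Finset ℕ :=
  (Finset.range (⌊2 * L⌋₊ + 1)).filter
    (fun ℓ => ℓ.Prime ∧ Odd ℓ ∧ ℓ ≠ p ∧ L ≤ (ℓ : ℝ) ∧ (ℓ : ℝ) ≤ 2 * L)

/-- The finset `I(P)` of primes `p ∈ [P, 2P]` with `p > 3` not dividing the
discriminant of `W`. -/
def goodPrimes (W : WeierstrassCurve ℤ) (P : ℝ) : Finset ℕ :=
  (Finset.range (⌊2 * P⌋₊ + 1)).filter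
    (fun p => p.Prime ∧ 3 < p ∧ ¬ ((p : ℤ) ∣ W.Δ) ∧ P ≤ (p : ℝ) ∧ (p : ℝ) ≤ 2 * P)

open Finset Real

def dyadicPrimes (L : ℝ) : Finset ℕ :=
  (range (⌊2 * L⌋₊ + 1)).filter
    fun ℓ => ℓ.Prime ∧ L ≤ (ℓ : ℝ) ∧ (ℓ : ℝ) ≤ 2 * L

lemma mem_dyadicPrimes {L : ℝ} {ℓ : ℕ} :
    ℓ ∈ dyadicPrimes L ↔ ℓ.Prime ∧ L ≤ (ℓ : ℝ) ∧ (ℓ : ℝ) ≤ 2 * L := by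
  simp only [dyadicPrimes, mem_filter, mem_range, and_iff_right_iff_imp]
  exact fun h => Nat.lt_succ_of_le (Nat.le_floor h.2.2)

lemma omegaL_eq_card_filter (L : ℝ) (d : ℤ) :
    omegaL L d = #((dyadicPrimes L).filter (fun ℓ : ℕ => (ℓ : ℤ) ∣ d)) := by
  rw [omegaL, ← Set.ncard_coe_finset]
  refine congrArg Set.ncard (Set.ext fun ℓ => ?_)
  simp [mem_dyadicPrimes, and_assoc]

lemma pow_card_dyadicPrimes_le {L : ℝ} (hL : 0 ≤ L) :
    L ^ #(dyadicPrimes L) ≤ (4 : ℝ) ^ ⌊2 * L⌋₊ := by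
  have hsub : dyadicPrimes L ⊆ (range (⌊2 * L⌋₊ + 1)).filter Nat.Prime :=
    fun ℓ hℓ => by
      simp only [dyadicPrimes, mem_filter] at hℓ ⊢
      exact ⟨hℓ.1, hℓ.2.1⟩
  have hprod : ∏ ℓ ∈ dyadicPrimes L, ℓ ≤ 4 ^ ⌊2 * L⌋₊ :=
    calc ∏ ℓ ∈ dyadicPrimes L, ℓ ≤ primorial ⌊2 * L⌋₊ :=
          prod_le_prod_of_subset_of_one_le' hsub fun ℓ hℓ _ => (mem_filter.mp hℓ).2.one_lt.le
      _ ≤ 4 ^ ⌊2 * L⌋₊ := primorial_le_four_pow _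
  calc L ^ #(dyadicPrimes L) = ∏ _ℓ ∈ dyadicPrimes L, L := (prod_const L).symm
    _ ≤ ∏ ℓ ∈ dyadicPrimes L, (ℓ : ℝ) :=
        prod_le_prod (fun _ _ => hL) fun ℓ hℓ => (mem_dyadicPrimes.mp hℓ).2.1
    _ ≤ (4 : ℝ) ^ ⌊2 * L⌋₊ := by rw [← Nat.cast_prod]; exact_mod_cast hprod

lemma card_dyadicPrimes_mul_log_le {L : ℝ} (hL : 0 < L) :
    #(dyadicPrimes L) * log L ≤ 3 * L := by
  have hlog4 : log 4 ≤ 3 / 2 := by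
    rw [show (4 : ℝ) = 2 ^ 2 by norm_num, Real.log_pow]
    linarith [Real.log_two_lt_d9]
  calc #(dyadicPrimes L) * log L = log (L ^ #(dyadicPrimes L)) := (Real.log_pow _ _).symm
    _ ≤ log ((4 : ℝ) ^ ⌊2 * L⌋₊) :=
        Real.log_le_log (by positivity) (pow_card_dyadicPrimes_le hL.le)
    _ = ⌊2 * L⌋₊ * log 4 := Real.log_pow _ _
    _ ≤ 2 * L * (3 / 2) := by
        gcongr
        exact Nat.floor_le (by positivity)
    _ = 3 * L := by ring

section SmallSubsets

variable {α : Type*} [DecidableEq α] {ν : ℕ} {A S : Finset α}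

def smallSubsets (ν : ℕ) (A : Finset α) : Finset (Finset α) :=
  (Icc 1 ν).biUnion fun k => A.powersetCard k

lemma mem_smallSubsets : S ∈ smallSubsets ν A ↔ S ⊆ A ∧ S.Nonempty ∧ #S ≤ ν := by
  simp only [smallSubsets, mem_biUnion, mem_Icc, mem_powersetCard, ← card_pos]
  constructor
  · rintro ⟨k, ⟨hk1, hkν⟩, hSA, rfl⟩
    exact ⟨hSA, hk1, hkν⟩
  · rintro ⟨hSA, hS1, hSν⟩
    exact ⟨#S, ⟨hS1, hSν⟩, hSA, rfl⟩

lemma smallSubsets_filter (p : α → Prop) [DecidablePred p] :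
    smallSubsets ν (A.filter p) = (smallSubsets ν A).filter fun S => ∀ x ∈ S, p x := by
  ext S
  simp only [mem_filter, mem_smallSubsets, subset_iff]
  grind

lemma sum_smallSubsets_card {M : Type*} [AddCommMonoid M] (f : ℕ → M) :
    ∑ S ∈ smallSubsets ν A, f #S = ∑ k ∈ Icc 1 ν, (#A).choose k • f k := by
  rw [smallSubsets, sum_biUnion]
  · refine sum_congr rfl fun k _ => ?_
    rw [sum_congr rfl fun S hS => by rw [(mem_powersetCard.mp hS).2], sum_const,
      card_powersetCard]
  · exact fun i _ j _ hij => disjoint_left.mpr fun S hSi hSj =>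
      hij ((mem_powersetCard.mp hSi).2.symm.trans (mem_powersetCard.mp hSj).2)

lemma card_pow_le_card_smallSubsets_mul (hν : 1 ≤ ν) :
    #A ^ ν ≤ #(smallSubsets ν A) * ν ^ ν := by
  have : Nonempty (Fin ν) := ⟨⟨0, hν⟩⟩
  let entries : (Fin ν → α) → Finset α := fun f => univ.image f
  have hmaps : ∀ f ∈ Fintype.piFinset fun _ : Fin ν => A, entries f ∈ smallSubsets ν A := by
    intro f hf
    refine mem_smallSubsets.mpr ⟨?_, univ_nonempty.image f, card_image_le.trans (by simp)⟩
    rintro _ hx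
    obtain ⟨i, -, rfl⟩ := mem_image.mp hx
    exact Fintype.mem_piFinset.mp hf i
  have hfiber : ∀ S ∈ smallSubsets ν A,
      #((Fintype.piFinset fun _ : Fin ν => A).filter fun f => entries f = S) ≤ ν ^ ν := by
    intro S hS
    calc #((Fintype.piFinset fun _ : Fin ν => A).filter fun f => entries f = S)
        ≤ #(Fintype.piFinset fun _ : Fin ν => S) := by
          refine card_le_card fun f hf => Fintype.mem_piFinset.mpr fun i => ?_
          rw [← (mem_filter.mp hf).2]
          exact mem_image_of_mem f (mem_univ i)
      _ = #S ^ ν := Fintype.card_piFinset_const S ν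
      _ ≤ ν ^ ν := Nat.pow_le_pow_left (mem_smallSubsets.mp hS).2.2 ν
  rw [← Fintype.card_piFinset_const, card_eq_sum_card_fiberwise hmaps]
  exact sum_le_card_nsmul _ _ _ hfiber

end SmallSubsets

section PrimeProducts

variable {S : Finset ℕ}

lemma natCast_prod_primes_dvd_iff (hS : ∀ p ∈ S, p.Prime) (d : ℤ) :
    ((∏ p ∈ S, p : ℕ) : ℤ) ∣ d ↔ ∀ p ∈ S, (p : ℤ) ∣ d := by
  simp only [Int.natCast_dvd]
  exact ⟨fun h p hp => (dvd_prod_of_mem _ hp).trans h,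
    prod_primes_dvd _ fun p hp => (hS p hp).prime⟩

lemma squarefree_prod_primes (hS : ∀ p ∈ S, p.Prime) : Squarefree (∏ p ∈ S, p) :=
  squarefree_prod_of_pairwise_isCoprime
    (fun p hp q hq hpq => Nat.coprime_iff_isRelPrime.mp <|
      (Nat.coprime_primes (hS p hp) (hS q hq)).mpr hpq)
    fun p hp => (hS p hp).prime.squarefree

lemma totient_prod_primes (hS : ∀ p ∈ S, p.Prime) :
    (∏ p ∈ S, p).totient = ∏ p ∈ S, (p - 1) := by
  have hpos : 0 < ∏ p ∈ S, p := prod_pos fun p hp => (hS p hp).pos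
  rw [Nat.totient_eq_div_primeFactors_mul, Nat.primeFactors_prod hS, Nat.div_self hpos, one_mul]

lemma one_lt_prod_primes (hS : ∀ p ∈ S, p.Prime) (hne : S.Nonempty) : 1 < ∏ p ∈ S, p := by
  obtain ⟨p, hp⟩ := hne
  exact (hS p hp).one_lt.trans_le <|
    single_le_prod' (fun q hq => (hS q hq).one_lt.le) hp

lemma odd_prod_primes (hS : ∀ p ∈ S, p.Prime) (h2 : 2 ∉ S) : Odd (∏ p ∈ S, p) :=
  prod_induction _ Odd (fun _ _ => Odd.mul) odd_one fun p hp =>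
    (hS p hp).odd_of_ne_two (ne_of_mem_of_not_mem hp h2)

end PrimeProducts

lemma one_lt_log_of_three_le {L : ℝ} (hL : 3 ≤ L) : 1 < log L := by
  rw [lt_log_iff_exp_lt (by linarith)]
  linarith [exp_one_lt_d9]

section BinomialBounds

variable {L : ℝ} {n k ν : ℕ}

lemma choose_div_pow_le (hL : 3 ≤ L) (hn : n * log L ≤ 3 * L) (hk : k ∈ Icc 1 ν) :
    (n.choose k : ℝ) / (L - 1) ^ k ≤ 5 ^ ν / log L := by
  obtain ⟨hk1, hkν⟩ := mem_Icc.mp hk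
  have hlog := one_lt_log_of_three_le hL
  have hL1 : 0 < L - 1 := by linarith
  have hratio : (n : ℝ) / (L - 1) ≤ 5 / log L := by
    rw [div_le_div_iff₀ hL1 (by linarith)]
    linarith
  calc (n.choose k : ℝ) / (L - 1) ^ k ≤ n ^ k / (L - 1) ^ k :=
        div_le_div_of_nonneg_right (mod_cast n.choose_le_pow k) (pow_nonneg hL1.le k)
    _ = (n / (L - 1)) ^ k := (div_pow _ _ _).symm
    _ ≤ (5 / log L) ^ k := pow_le_pow_left₀ (div_nonneg n.cast_nonneg hL1.le) hratio k
    _ = 5 ^ k / log L ^ k := div_pow _ _ _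
    _ ≤ 5 ^ ν / log L := by
        gcongr
        · norm_num
        · exact le_self_pow₀ hlog.le (by omega)

lemma choose_mul_pow_le (hL : 3 ≤ L) (hn : n * log L ≤ 3 * L) (hkν : k ≤ ν) :
    (n.choose k : ℝ) * (2 * L) ^ (3 * ν) ≤ 24 ^ ν * L ^ (4 * ν) / log L ^ ν := by
  have hlog := one_lt_log_of_three_le hL
  have hn' : (n : ℝ) ≤ 3 * L / log L := (le_div_iff₀ (by linarith)).mpr hn
  have hone : 1 ≤ 3 * L / log L := by
    rw [le_div_iff₀ (by linarith)]
    linarith [log_le_self (by linarith : (0 : ℝ) ≤ L)]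
  calc (n.choose k : ℝ) * (2 * L) ^ (3 * ν) ≤ (3 * L / log L) ^ ν * (2 * L) ^ (3 * ν) := by
        gcongr
        calc (n.choose k : ℝ) ≤ n ^ k := mod_cast n.choose_le_pow k
          _ ≤ (3 * L / log L) ^ k := by gcongr
          _ ≤ (3 * L / log L) ^ ν := pow_le_pow_right₀ hone hkν
    _ = 24 ^ ν * L ^ (4 * ν) / log L ^ ν := by
        rw [div_pow, mul_pow, mul_pow, pow_mul, pow_mul,
          show (24 : ℝ) ^ ν = 3 ^ ν * 8 ^ ν by rw [← mul_pow]; norm_num]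
        ring

lemma choose_mul_le {X Y : ℝ} (hL : 3 ≤ L) (hn : n * log L ≤ 3 * L) (hk : k ∈ Icc 1 ν)
    (hX : 0 ≤ X) (hY : 0 ≤ Y) :
    (n.choose k : ℝ) * (X / (L - 1) ^ k + (2 * L) ^ (3 * ν) * Y) ≤
      24 ^ ν * (X / log L + L ^ (4 * ν) * Y / log L ^ ν) := by
  have hlog := one_lt_log_of_three_le hL
  calc (n.choose k : ℝ) * (X / (L - 1) ^ k + (2 * L) ^ (3 * ν) * Y)
      = (n.choose k : ℝ) / (L - 1) ^ k * X + (n.choose k : ℝ) * (2 * L) ^ (3 * ν) * Y := by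
        ring
    _ ≤ 5 ^ ν / log L * X + 24 ^ ν * L ^ (4 * ν) / log L ^ ν * Y := by
        gcongr ?_ * X + ?_ * Y
        · exact choose_div_pow_le hL hn hk
        · exact choose_mul_pow_le hL hn (mem_Icc.mp hk).2
    _ ≤ 24 ^ ν / log L * X + 24 ^ ν * L ^ (4 * ν) / log L ^ ν * Y := by
        gcongr
        norm_num
    _ = 24 ^ ν * (X / log L + L ^ (4 * ν) * Y / log L ^ ν) := by ring

end BinomialBounds

section MomentBound

variable {α : Type*} (I : Finset α) (D : α → ℤ) {ν : ℕ} {c L X Y : ℝ}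

/-- The hypothesis of `omegaL_moment_bound`, with `X = P / log P` and `Y = √P log P`. -/
def DvdCountBound (ν : ℕ) (c L X Y : ℝ) : Prop :=
  ∀ r : ℕ, 1 < r → Squarefree r → Odd r → r.primeFactors.card ≤ ν →
    (∀ ℓ ∈ r.primeFactors, L ≤ (ℓ : ℝ) ∧ (ℓ : ℝ) ≤ 2 * L) →
    (#(I.filter fun a => (r : ℤ) ∣ D a) : ℝ) ≤ c * (X / r.totient + (r : ℝ) ^ 3 * Y)

lemma omegaL_pow_le (hν : 1 ≤ ν) (d : ℤ) :
    omegaL L d ^ ν ≤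
      ν ^ ν * #((smallSubsets ν (dyadicPrimes L)).filter
        fun S => ((∏ ℓ ∈ S, ℓ : ℕ) : ℤ) ∣ d) := by
  have hfilter : (smallSubsets ν (dyadicPrimes L)).filter
      (fun S => ∀ ℓ ∈ S, ((ℓ : ℕ) : ℤ) ∣ d) =
      (smallSubsets ν (dyadicPrimes L)).filter fun S => ((∏ ℓ ∈ S, ℓ : ℕ) : ℤ) ∣ d :=
    filter_congr fun S hS => (natCast_prod_primes_dvd_iff
      (fun ℓ hℓ => (mem_dyadicPrimes.mp ((mem_smallSubsets.mp hS).1 hℓ)).1) d).symm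
  have h := card_pow_le_card_smallSubsets_mul
    (A := (dyadicPrimes L).filter fun ℓ : ℕ => (ℓ : ℤ) ∣ d) hν
  rwa [smallSubsets_filter, hfilter, mul_comm, ← omegaL_eq_card_filter] at h

lemma sum_omegaL_pow_le_sum_card (hν : 1 ≤ ν) :
    ∑ a ∈ I, omegaL L (D a) ^ ν ≤
      ν ^ ν * ∑ S ∈ smallSubsets ν (dyadicPrimes L),
        #(I.filter fun a => ((∏ ℓ ∈ S, ℓ : ℕ) : ℤ) ∣ D a) :=
  calc ∑ a ∈ I, omegaL L (D a) ^ ν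
      ≤ ∑ a ∈ I, ν ^ ν * #((smallSubsets ν (dyadicPrimes L)).filter
          fun S => ((∏ ℓ ∈ S, ℓ : ℕ) : ℤ) ∣ D a) :=
        sum_le_sum fun a _ => omegaL_pow_le hν (D a)
    _ = _ := by
        rw [← mul_sum]
        congr 1
        exact sum_card_bipartiteAbove_eq_sum_card_bipartiteBelow
          (r := fun a S => ((∏ ℓ ∈ S, ℓ : ℕ) : ℤ) ∣ D a)

lemma card_filter_prod_dvd_le (hL : 3 ≤ L) (hc : 0 ≤ c) (hX : 0 ≤ X) (hY : 0 ≤ Y)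
    (h : DvdCountBound I D ν c L X Y) {S : Finset ℕ}
    (hS : S ∈ smallSubsets ν (dyadicPrimes L)) :
    (#(I.filter fun a => ((∏ ℓ ∈ S, ℓ : ℕ) : ℤ) ∣ D a) : ℝ) ≤
      c * (X / (L - 1) ^ #S + (2 * L) ^ (3 * ν) * Y) := by
  obtain ⟨hSF, hne, hSν⟩ := mem_smallSubsets.mp hS
  have hmem : ∀ ℓ ∈ S, ℓ.Prime ∧ L ≤ (ℓ : ℝ) ∧ (ℓ : ℝ) ≤ 2 * L :=
    fun ℓ hℓ => mem_dyadicPrimes.mp (hSF hℓ)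
  have hprime : ∀ ℓ ∈ S, ℓ.Prime := fun ℓ hℓ => (hmem ℓ hℓ).1
  have htwo : 2 ∉ S := fun h2 => by
    have := (hmem 2 h2).2.1
    norm_num at this
    linarith
  have hfactors := Nat.primeFactors_prod hprime
  have htotient : (L - 1) ^ #S ≤ ((∏ ℓ ∈ S, ℓ).totient : ℝ) := by
    rw [totient_prod_primes hprime, Nat.cast_prod, ← prod_const]
    refine prod_le_prod (fun _ _ => by linarith) fun ℓ hℓ => ?_
    rw [Nat.cast_sub (hprime ℓ hℓ).one_le, Nat.cast_one]
    linarith [(hmem ℓ hℓ).2.1]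
  have hprod : ((∏ ℓ ∈ S, ℓ : ℕ) : ℝ) ≤ (2 * L) ^ ν := by
    calc ((∏ ℓ ∈ S, ℓ : ℕ) : ℝ) ≤ ∏ _ℓ ∈ S, 2 * L := by
          rw [Nat.cast_prod]
          exact prod_le_prod (fun _ _ => by positivity) fun ℓ hℓ => (hmem ℓ hℓ).2.2
      _ = (2 * L) ^ #S := prod_const _
      _ ≤ (2 * L) ^ ν := pow_le_pow_right₀ (by linarith) hSν
  refine (h _ (one_lt_prod_primes hprime hne) (squarefree_prod_primes hprime)
    (odd_prod_primes hprime htwo) (by rwa [hfactors])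
    (by rw [hfactors]; exact fun ℓ hℓ => (hmem ℓ hℓ).2)).trans ?_
  rw [mul_comm 3 ν, pow_mul]
  gcongr
  exact pow_pos (by linarith) _

theorem sum_omegaL_pow_le (hν : 1 ≤ ν) (hL : 3 ≤ L) (hc : 0 ≤ c) (hX : 0 ≤ X)
    (hY : 0 ≤ Y) (h : DvdCountBound I D ν c L X Y) :
    ∑ a ∈ I, (omegaL L (D a) : ℝ) ^ ν ≤
      ν ^ (ν + 1) * 24 ^ ν * c * (X / log L + L ^ (4 * ν) * Y / log L ^ ν) := by
  have hF := card_dyadicPrimes_mul_log_le (by linarith : 0 < L)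
  calc ∑ a ∈ I, (omegaL L (D a) : ℝ) ^ ν
      ≤ ν ^ ν * ∑ S ∈ smallSubsets ν (dyadicPrimes L),
          (#(I.filter fun a => ((∏ ℓ ∈ S, ℓ : ℕ) : ℤ) ∣ D a) : ℝ) :=
        mod_cast sum_omegaL_pow_le_sum_card I D hν
    _ ≤ ν ^ ν * ∑ S ∈ smallSubsets ν (dyadicPrimes L),
          c * (X / (L - 1) ^ #S + (2 * L) ^ (3 * ν) * Y) := by
        gcongr with S hS
        exact card_filter_prod_dvd_le I D hL hc hX hY h hS
    _ = ν ^ ν * ∑ k ∈ Icc 1 ν,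
          c * (((#(dyadicPrimes L)).choose k : ℝ) *
            (X / (L - 1) ^ k + (2 * L) ^ (3 * ν) * Y)) := by
        rw [sum_smallSubsets_card fun k => c * (X / (L - 1) ^ k + (2 * L) ^ (3 * ν) * Y)]
        simp only [nsmul_eq_mul, mul_left_comm]
    _ ≤ ν ^ ν * ∑ _k ∈ Icc 1 ν,
          c * (24 ^ ν * (X / log L + L ^ (4 * ν) * Y / log L ^ ν)) := by
        refine mul_le_mul_of_nonneg_left (sum_le_sum fun k hk => ?_) (by positivity)
        exact mul_le_mul_of_nonneg_left (choose_mul_le hL hF hk hX hY) hc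
    _ = ν ^ (ν + 1) * 24 ^ ν * c * (X / log L + L ^ (4 * ν) * Y / log L ^ ν) := by
        rw [sum_const, Nat.card_Icc, Nat.add_sub_cancel, nsmul_eq_mul, pow_succ]
        ring

end MomentBound

theorem omegaL_moment_bound_general (W : WeierstrassCurve ℤ)
    (ν : ℕ) (hν : 1 ≤ ν) (c : ℝ) (hc : 0 < c) :
    ∃ C : ℝ, 0 < C ∧ ∀ L P : ℝ, 3 ≤ L → 3 ≤ P →
      (∀ r : ℕ, 1 < r → Squarefree r → Odd r → r.primeFactors.card ≤ ν →
        (∀ ℓ ∈ r.primeFactors, L ≤ (ℓ : ℝ) ∧ (ℓ : ℝ) ≤ 2 * L) →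
        (((goodPrimes W P).filter (fun p => (r : ℤ) ∣ Dp W p)).card : ℝ) ≤
          c * (P / (r.totient * Real.log P) + (r : ℝ) ^ 3 * Real.sqrt P * Real.log P)) →
      ∑ p ∈ goodPrimes W P, (omegaL L (Dp W p) : ℝ) ^ ν ≤
        C * (P / (Real.log L * Real.log P) +
          L ^ (4 * ν) * Real.sqrt P * Real.log P / (Real.log L) ^ ν) := by
  have hν0 : (0 : ℝ) < ν := mod_cast hν
  refine ⟨ν ^ (ν + 1) * 24 ^ ν * c, by positivity, fun L P hL hP hyp => ?_⟩
  have hlogP : 0 < log P := log_pos (by linarith)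
  have hbound : DvdCountBound (goodPrimes W P) (Dp W) ν c L (P / log P) (√P * log P) :=
    fun r hr hsq hodd hcard hprimes => by
      convert hyp r hr hsq hodd hcard hprimes using 3 <;> ring
  calc ∑ p ∈ goodPrimes W P, (omegaL L (Dp W p) : ℝ) ^ ν
      ≤ ν ^ (ν + 1) * 24 ^ ν * c *
          (P / log P / log L + L ^ (4 * ν) * (√P * log P) / log L ^ ν) :=
        sum_omegaL_pow_le _ _ hν hL hc.le (by positivity) (by positivity) hbound
    _ = _ := by ring

theorem omegaL_moment_bound (W : WeierstrassCurve ℤ) (hΔ : W.Δ ≠ 0)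
    (ν : ℕ) (hν : 1 ≤ ν) (c : ℝ) (hc : 0 < c) :
    ∃ C : ℝ, 0 < C ∧ ∀ L P : ℝ, 3 ≤ L → 3 ≤ P →
      (∀ r : ℕ, 1 < r → Squarefree r → Odd r → r.primeFactors.card ≤ ν →
        (∀ ℓ ∈ r.primeFactors, L ≤ (ℓ : ℝ) ∧ (ℓ : ℝ) ≤ 2 * L) →
        (((goodPrimes W P).filter (fun p => (r : ℤ) ∣ Dp W p)).card : ℝ) ≤
          c * (P / (r.totient * Real.log P) + (r : ℝ) ^ 3 * Real.sqrt P * Real.log P)) →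
      ∑ p ∈ goodPrimes W P, (omegaL L (Dp W p) : ℝ) ^ ν ≤
        C * (P / (Real.log L * Real.log P) +
          L ^ (4 * ν) * Real.sqrt P * Real.log P / (Real.log L) ^ ν) :=
  omegaL_moment_bound_general W ν hν c hc

end
end

section
/- For every real c > 0 there exists a real C > 0 such that the following holds for all reals L ≥ 3 and P ≥ 3. Let I(P) denote the set of primes p ∈ [P,2P] with p > 3 and p not dividing Δ_E. Suppose that for all distinct primes ℓ₁, ℓ₂ ∈ [L,2L] one has | Σ_{p ∈ I(P)} (D_p/(ℓ₁ℓ₂)) − (π(2P) − π(P))·∏_{i=1}^{2} (−1/ℓᵢ)·(ℓᵢ² − 1)^{−1} | ≤ c·ℓ₁³·ℓ₂³·P^{1/2}·log P. Then Σ_{p ∈ I(P)} ( Σ_{ℓ} (D_p/ℓ) )² ≤ C·( L·P/(log L · log P) + L⁸·P^{1/2}·(log P)/(log L)² ), where the inner sum ranges over all odd primes ℓ ∈ [L,2L] with ℓ ≠ p. -/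
open scoped Classical

noncomputable section

/-!
Expanding the square turns the left side into `∑_{ℓ₁, ℓ₂} ∑_p (D_p/ℓ₁)(D_p/ℓ₂)`. The diagonal
`ℓ₁ = ℓ₂` contributes at most `#I(P)` for each `ℓ₁`. Off the diagonal, multiplicativity of the
Jacobi symbol in the modulus turns the inner sum into `∑_p (D_p/ℓ₁ℓ₂)`, up to the two terms
`p = ℓᵢ`, and the hypothesis bounds this by the main term, which is `O(P / (L⁴ log P))`, plus
`c (2L)⁶ √P log P`. Chebyshev's bound `θ(x) ≤ x log 4` gives at most `3x / log x` primes in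
`[x, 2x]`, which counts both the `ℓ` and the `p`, and yields the claim with `C = 600 (c + 1)`.
-/

open Finset Real Chebyshev

lemma card_mul_log_le_of_primes_mem_Icc {x : ℝ} (hx : 0 < x) (S : Finset ℕ)
    (hS : ∀ q ∈ S, q.Prime ∧ x ≤ q ∧ (q : ℝ) ≤ 2 * x) :
    (#S : ℝ) * log x ≤ log 4 * (2 * x) :=
  calc (#S : ℝ) * log x = ∑ _q ∈ S, log x := by rw [sum_const, nsmul_eq_mul]
    _ ≤ ∑ q ∈ S, log q := sum_le_sum fun q hq => log_le_log hx (hS q hq).2.1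
    _ ≤ θ (2 * x) := by
        rw [theta_eq_sum_primesLE]
        refine sum_le_sum_of_subset_of_nonneg (fun q hq => ?_) fun q _ _ => log_natCast_nonneg q
        exact Nat.mem_primesLE.mpr ⟨Nat.le_floor (hS q hq).2.2, (hS q hq).1⟩
    _ ≤ log 4 * (2 * x) := theta_le_log4_mul_x (by positivity)

lemma card_le_of_primes_mem_Icc {x : ℝ} (hx : 1 < x) (S : Finset ℕ)
    (hS : ∀ q ∈ S, q.Prime ∧ x ≤ q ∧ (q : ℝ) ≤ 2 * x) :
    (#S : ℝ) ≤ 3 * (x / log x) := by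
  have hlog4 : log 4 ≤ 3 / 2 := by
    rw [show (4 : ℝ) = 2 ^ 2 by norm_num, log_pow]
    linarith [log_two_lt_d9]
  rw [mul_div_assoc', le_div_iff₀ (log_pos hx)]
  nlinarith [card_mul_log_le_of_primes_mem_Icc (by linarith) S hS]

lemma primePi_eq_primeCounting {z : ℝ} (hz : 0 ≤ z) : primePi z = Nat.primeCounting ⌊z⌋₊ := by
  rw [← Nat.primesLE_card_eq_primeCounting, primePi, ← Set.ncard_coe_finset]
  congr 1
  ext q
  simp [Nat.mem_primesLE, Nat.le_floor_iff hz, and_comm]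

lemma abs_primePi_two_mul_sub_le {P : ℝ} (hP : 1 < P) :
    |(primePi (2 * P) : ℝ) - primePi P| ≤ 3 * (P / log P) := by
  have hsub : Nat.primesLE ⌊P⌋₊ ⊆ Nat.primesLE ⌊2 * P⌋₊ :=
    Nat.primesLE_mono (Nat.floor_mono (by linarith))
  rw [primePi_eq_primeCounting (by linarith), primePi_eq_primeCounting (by linarith),
    ← Nat.primesLE_card_eq_primeCounting, ← Nat.primesLE_card_eq_primeCounting,
    ← Nat.cast_sub (card_le_card hsub), ← card_sdiff_of_subset hsub, Nat.abs_cast]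
  refine card_le_of_primes_mem_Icc hP _ fun q hq => ?_
  simp only [mem_sdiff, Nat.mem_primesLE, not_and] at hq
  obtain ⟨⟨hq2P, hq⟩, hqP⟩ := hq
  exact ⟨hq, (Nat.lt_of_floor_lt (not_le.mp fun h => hqP h hq)).le,
    (Nat.le_floor_iff (by linarith)).mp hq2P⟩

lemma abs_jacobiSym_le_one (a : ℤ) (b : ℕ) : |(jacobiSym a b : ℝ)| ≤ 1 := by
  rcases jacobiSym.trichotomy a b with h | h | h <;> simp [h]

lemma abs_div_sq_sub_one_le {s ℓ L : ℝ} (hs : |s| ≤ 1) (hL : 0 ≤ L) (hL2 : 2 ≤ L ^ 2)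
    (hℓ : L ≤ ℓ) : |s / (ℓ ^ 2 - 1)| ≤ 2 / L ^ 2 := by
  have hLℓ : L ^ 2 ≤ ℓ ^ 2 := pow_le_pow_left₀ hL hℓ 2
  rw [abs_div, abs_of_pos (show (0 : ℝ) < ℓ ^ 2 - 1 by linarith),
    div_le_div_iff₀ (by linarith) (by linarith)]
  nlinarith [abs_nonneg s]

lemma sum_sq_sum_le {ι κ : Type*} (I : Finset ι) (B : Finset κ) (f : ι → κ → ℝ)
    (hf : ∀ i ∈ I, ∀ k ∈ B, |f i k| ≤ 1) {E : ℝ} (hE : 0 ≤ E)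
    (hoff : ∀ k₁ ∈ B, ∀ k₂ ∈ B, k₁ ≠ k₂ → ∑ i ∈ I, f i k₁ * f i k₂ ≤ E) :
    ∑ i ∈ I, (∑ k ∈ B, f i k) ^ 2 ≤ #B * (#I + #B * E) := by
  have hexpand : ∑ i ∈ I, (∑ k ∈ B, f i k) ^ 2 =
      ∑ k₁ ∈ B, ∑ k₂ ∈ B, ∑ i ∈ I, f i k₁ * f i k₂ := by
    simp_rw [sq, sum_mul_sum]
    rw [sum_comm]
    exact sum_congr rfl fun _ _ => sum_comm
  have hrow : ∀ k₁ ∈ B, ∑ k₂ ∈ B, ∑ i ∈ I, f i k₁ * f i k₂ ≤ #I + #B * E := by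
    intro k₁ hk₁
    have hdiag : ∑ i ∈ I, f i k₁ * f i k₁ ≤ #I := by
      rw [card_eq_sum_ones, Nat.cast_sum, Nat.cast_one]
      exact sum_le_sum fun i hi => abs_le_one_iff_mul_self_le_one.mp (hf i hi k₁ hk₁)
    have hrest : ∑ k₂ ∈ B.erase k₁, ∑ i ∈ I, f i k₁ * f i k₂ ≤ #B * E :=
      calc _ ≤ #(B.erase k₁) • E := sum_le_card_nsmul _ _ _ fun k₂ hk₂ =>
            hoff k₁ hk₁ k₂ (mem_of_mem_erase hk₂) (ne_of_mem_erase hk₂).symm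
        _ ≤ #B * E := by
            rw [nsmul_eq_mul]
            exact mul_le_mul_of_nonneg_right (by exact_mod_cast card_erase_le) hE
    rw [← add_sum_erase B _ hk₁]
    linarith
  calc _ = _ := hexpand
    _ ≤ #B • ((#I : ℝ) + #B * E) := sum_le_card_nsmul _ _ _ hrow
    _ = _ := nsmul_eq_mul _ _

def jacobiSymAway (D : ℕ → ℤ) (p ℓ : ℕ) : ℝ :=
  if ℓ = p then 0 else (jacobiSym (D p) ℓ : ℝ)

lemma abs_jacobiSymAway_le_one (D : ℕ → ℤ) (p ℓ : ℕ) : |jacobiSymAway D p ℓ| ≤ 1 := by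
  unfold jacobiSymAway
  split_ifs
  exacts [by simp, abs_jacobiSym_le_one _ _]

-- No prime is `0`, so `oddPrimesBetween L 0` is the set of all odd primes in `[L, 2L]`.
lemma sum_oddPrimesBetween_eq_sum_jacobiSymAway (D : ℕ → ℤ) (L : ℝ) (p : ℕ) :
    ∑ ℓ ∈ oddPrimesBetween L p, (jacobiSym (D p) ℓ : ℝ) =
      ∑ ℓ ∈ oddPrimesBetween L 0, jacobiSymAway D p ℓ := by
  have hfilter : oddPrimesBetween L p = (oddPrimesBetween L 0).filter (· ≠ p) := by
    ext ℓ
    simp only [oddPrimesBetween, mem_filter]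
    constructor
    · rintro ⟨hr, hℓ, ho, hp, h⟩
      exact ⟨⟨hr, hℓ, ho, hℓ.ne_zero, h⟩, hp⟩
    · rintro ⟨⟨hr, hℓ, ho, -, h⟩, hp⟩
      exact ⟨hr, hℓ, ho, hp, h⟩
  rw [hfilter, sum_filter]
  exact sum_congr rfl fun ℓ _ => by simp only [jacobiSymAway, ite_not]

lemma sum_jacobiSymAway_mul_le (D : ℕ → ℤ) (I : Finset ℕ) {ℓ₁ ℓ₂ : ℕ} (h₁ : ℓ₁ ≠ 0)
    (h₂ : ℓ₂ ≠ 0) :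
    ∑ p ∈ I, jacobiSymAway D p ℓ₁ * jacobiSymAway D p ℓ₂ ≤
      ∑ p ∈ I, (jacobiSym (D p) (ℓ₁ * ℓ₂) : ℝ) + 4 := by
  set g := fun p => jacobiSymAway D p ℓ₁ * jacobiSymAway D p ℓ₂ - jacobiSym (D p) (ℓ₁ * ℓ₂)
  have hg_le : ∀ p, g p ≤ 2 := by
    intro p
    have h := abs_le.mp (abs_jacobiSym_le_one (D p) (ℓ₁ * ℓ₂))
    have hprod : |jacobiSymAway D p ℓ₁ * jacobiSymAway D p ℓ₂| ≤ 1 := by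
      rw [abs_mul]
      exact mul_le_one₀ (abs_jacobiSymAway_le_one _ _ _) (abs_nonneg _)
        (abs_jacobiSymAway_le_one _ _ _)
    linarith [(abs_le.mp hprod).2]
  have hg_zero : ∀ p ∈ I, p ∉ I ∩ {ℓ₁, ℓ₂} → g p = 0 := by
    intro p hp hp'
    simp only [mem_inter, mem_insert, mem_singleton, not_and, not_or] at hp'
    obtain ⟨hp₁, hp₂⟩ := hp' hp
    simp only [g, jacobiSymAway, if_neg (Ne.symm hp₁), if_neg (Ne.symm hp₂),
      jacobiSym.mul_right' _ h₁ h₂, Int.cast_mul, sub_self]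
  have hsum : ∑ p ∈ I, g p ≤ 4 :=
    calc ∑ p ∈ I, g p = ∑ p ∈ I ∩ {ℓ₁, ℓ₂}, g p := (sum_subset inter_subset_left hg_zero).symm
      _ ≤ #(I ∩ {ℓ₁, ℓ₂}) • 2 := sum_le_card_nsmul _ _ _ fun p _ => hg_le p
      _ ≤ 4 := by
          rw [nsmul_eq_mul]
          have : #(I ∩ {ℓ₁, ℓ₂}) ≤ 2 := (card_le_card inter_subset_right).trans card_le_two
          have : (#(I ∩ {ℓ₁, ℓ₂}) : ℝ) ≤ 2 := by exact_mod_cast this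
          linarith
  simp only [g, sum_sub_distrib] at hsum
  linarith

/-- The main term `(π(2P) - π(P)) ∏ᵢ (-1/ℓᵢ) (ℓᵢ² - 1)⁻¹` of `∑_{p ∈ I(P)} (D_p/ℓ₁ℓ₂)`. -/
def mainTerm (P : ℝ) (ℓ₁ ℓ₂ : ℕ) : ℝ :=
  ((primePi (2 * P) : ℝ) - primePi P) *
    ((if ℓ₁ % 4 = 1 then (1 : ℝ) else -1) / ((ℓ₁ : ℝ) ^ 2 - 1) *
     ((if ℓ₂ % 4 = 1 then (1 : ℝ) else -1) / ((ℓ₂ : ℝ) ^ 2 - 1)))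

lemma abs_mainTerm_le {P L : ℝ} (hP : 1 < P) (hL : 2 ≤ L) {ℓ₁ ℓ₂ : ℕ} (h₁ : L ≤ ℓ₁)
    (h₂ : L ≤ ℓ₂) : |mainTerm P ℓ₁ ℓ₂| ≤ 12 * (P / log P) / L ^ 4 := by
  have hsign : ∀ ℓ : ℕ, |(if ℓ % 4 = 1 then (1 : ℝ) else -1)| ≤ 1 := fun ℓ => by
    split_ifs <;> norm_num
  have hL2 : 2 ≤ L ^ 2 := by nlinarith
  have hL0 : 0 ≤ L := by linarith
  rw [mainTerm, abs_mul, abs_mul]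
  calc _ ≤ 3 * (P / log P) * (2 / L ^ 2 * (2 / L ^ 2)) := by
        refine mul_le_mul (abs_primePi_two_mul_sub_le hP) ?_ (by positivity)
          (mul_nonneg (by norm_num) (div_nonneg (by positivity) (log_nonneg hP.le)))
        exact mul_le_mul (abs_div_sq_sub_one_le (hsign ℓ₁) hL0 hL2 h₁)
          (abs_div_sq_sub_one_le (hsign ℓ₂) hL0 hL2 h₂) (abs_nonneg _) (by positivity)
    _ = 12 * (P / log P) / L ^ 4 := by ring

lemma sum_jacobiSymAway_mul_le_of_discrepancy (D : ℕ → ℤ) (I : Finset ℕ) {c L P : ℝ}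
    (hc : 0 ≤ c) (hL : 2 ≤ L) (hP : 1 < P) {ℓ₁ ℓ₂ : ℕ}
    (h₁ : ℓ₁.Prime ∧ L ≤ ℓ₁ ∧ (ℓ₁ : ℝ) ≤ 2 * L) (h₂ : ℓ₂.Prime ∧ L ≤ ℓ₂ ∧ (ℓ₂ : ℝ) ≤ 2 * L)
    (hdisc : |∑ p ∈ I, (jacobiSym (D p) (ℓ₁ * ℓ₂) : ℝ) - mainTerm P ℓ₁ ℓ₂| ≤
      c * (ℓ₁ : ℝ) ^ 3 * (ℓ₂ : ℝ) ^ 3 * √P * log P) :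
    ∑ p ∈ I, jacobiSymAway D p ℓ₁ * jacobiSymAway D p ℓ₂ ≤
      12 * (P / log P) / L ^ 4 + c * (2 * L) ^ 3 * (2 * L) ^ 3 * (√P * log P) + 4 := by
  have hℓ : c * (ℓ₁ : ℝ) ^ 3 * (ℓ₂ : ℝ) ^ 3 ≤ c * (2 * L) ^ 3 * (2 * L) ^ 3 := by
    gcongr
    exacts [h₁.2.2, h₂.2.2]
  have herr := mul_le_mul_of_nonneg_right hℓ (mul_nonneg (sqrt_nonneg P) (log_nonneg hP.le))
  have hmain := (abs_le.mp (abs_mainTerm_le hP hL h₁.2.1 h₂.2.1)).2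
  linarith [(abs_le.mp hdisc).2, sum_jacobiSymAway_mul_le D I h₁.1.ne_zero h₂.1.ne_zero]

lemma prime_and_mem_Icc_of_mem_oddPrimesBetween {L : ℝ} {p ℓ : ℕ}
    (h : ℓ ∈ oddPrimesBetween L p) : ℓ.Prime ∧ L ≤ ℓ ∧ (ℓ : ℝ) ≤ 2 * L := by
  simp only [oddPrimesBetween, mem_filter] at h
  exact ⟨h.2.1, h.2.2.2.2⟩

lemma prime_and_mem_Icc_of_mem_goodPrimes {W : WeierstrassCurve ℤ} {P : ℝ} {p : ℕ}
    (h : p ∈ goodPrimes W P) : p.Prime ∧ P ≤ p ∧ (p : ℝ) ≤ 2 * P := by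
  simp only [goodPrimes, mem_filter] at h
  exact ⟨h.2.1, h.2.2.2.2⟩

lemma one_le_log_of_three_le {x : ℝ} (hx : 3 ≤ x) : 1 ≤ log x :=
  (le_log_iff_exp_le (by linarith)).mpr (exp_one_lt_three.le.trans hx)

lemma second_moment_arith {c x y z L : ℝ} (hc : 0 ≤ c) (hx : 0 ≤ x) (hxL : x ≤ L) (hL : 1 ≤ L)
    (hy : 0 ≤ y) (hz : 1 ≤ z) :
    3 * x * (3 * y + 3 * x * (12 * y / L ^ 4 + c * (2 * L) ^ 3 * (2 * L) ^ 3 * z + 4)) ≤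
      600 * (c + 1) * (x * y + x ^ 2 * L ^ 6 * z) := by
  have hdiag : x ^ 2 * y / L ^ 4 ≤ x * y := by
    rw [div_le_iff₀ (by positivity)]
    have : x ≤ L ^ 4 := hxL.trans (le_self_pow₀ hL (by norm_num))
    nlinarith [mul_nonneg hx hy]
  have hsq : x ^ 2 ≤ x ^ 2 * L ^ 6 * z := by
    have : 1 ≤ L ^ 6 * z := one_le_mul_of_one_le_of_one_le (one_le_pow₀ hL) hz
    nlinarith [sq_nonneg x]
  have hexpand :
      3 * x * (3 * y + 3 * x * (12 * y / L ^ 4 + c * (2 * L) ^ 3 * (2 * L) ^ 3 * z + 4)) =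
        9 * (x * y) + 108 * (x ^ 2 * y / L ^ 4) + 576 * c * (x ^ 2 * L ^ 6 * z) + 36 * x ^ 2 := by
    ring
  have hxy : 0 ≤ x * y := mul_nonneg hx hy
  have hxz : 0 ≤ x ^ 2 * L ^ 6 * z := by positivity
  rw [hexpand]
  nlinarith [mul_nonneg hc hxy, mul_nonneg hc hxz]

theorem char_sum_second_moment_general (W : WeierstrassCurve ℤ)
    (c : ℝ) (hc : 0 < c) :
    ∃ C : ℝ, 0 < C ∧ ∀ L P : ℝ, 3 ≤ L → 3 ≤ P →
      (∀ ℓ₁ ℓ₂ : ℕ, ℓ₁.Prime → ℓ₂.Prime → ℓ₁ ≠ ℓ₂ →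
        L ≤ (ℓ₁ : ℝ) → (ℓ₁ : ℝ) ≤ 2 * L → L ≤ (ℓ₂ : ℝ) → (ℓ₂ : ℝ) ≤ 2 * L →
        |(∑ p ∈ goodPrimes W P, (jacobiSym (Dp W p) (ℓ₁ * ℓ₂) : ℝ)) -
          ((primePi (2 * P) : ℝ) - primePi P) *
            ((if ℓ₁ % 4 = 1 then (1 : ℝ) else -1) / ((ℓ₁ : ℝ) ^ 2 - 1) *
             ((if ℓ₂ % 4 = 1 then (1 : ℝ) else -1) / ((ℓ₂ : ℝ) ^ 2 - 1)))| ≤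
          c * (ℓ₁ : ℝ) ^ 3 * (ℓ₂ : ℝ) ^ 3 * Real.sqrt P * Real.log P) →
      ∑ p ∈ goodPrimes W P,
          (∑ ℓ ∈ oddPrimesBetween L p, (jacobiSym (Dp W p) ℓ : ℝ)) ^ 2 ≤
        C * (L * P / (Real.log L * Real.log P) +
          L ^ 8 * Real.sqrt P * Real.log P / (Real.log L) ^ 2) := by
  refine ⟨600 * (c + 1), by positivity, fun L P hL hP hdisc => ?_⟩
  set B := oddPrimesBetween L 0
  set I := goodPrimes W P
  have hB := fun ℓ (hℓ : ℓ ∈ B) => prime_and_mem_Icc_of_mem_oddPrimesBetween hℓ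
  have hlogL := one_le_log_of_three_le hL
  have hlogP := one_le_log_of_three_le hP
  have hoff : ∀ ℓ₁ ∈ B, ∀ ℓ₂ ∈ B, ℓ₁ ≠ ℓ₂ →
      ∑ p ∈ I, jacobiSymAway (Dp W) p ℓ₁ * jacobiSymAway (Dp W) p ℓ₂ ≤
        12 * (P / log P) / L ^ 4 + c * (2 * L) ^ 3 * (2 * L) ^ 3 * (√P * log P) + 4 := by
    intro ℓ₁ h₁ ℓ₂ h₂ hne
    obtain ⟨hp₁, hL₁, hU₁⟩ := hB ℓ₁ h₁
    obtain ⟨hp₂, hL₂, hU₂⟩ := hB ℓ₂ h₂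
    exact sum_jacobiSymAway_mul_le_of_discrepancy (Dp W) I hc.le (by linarith) (by linarith)
      (hB ℓ₁ h₁) (hB ℓ₂ h₂) (hdisc ℓ₁ ℓ₂ hp₁ hp₂ hne hL₁ hU₁ hL₂ hU₂)
  have hcardB := card_le_of_primes_mem_Icc (by linarith) B hB
  have hcardI := card_le_of_primes_mem_Icc (by linarith) I
    fun p hp => prime_and_mem_Icc_of_mem_goodPrimes hp
  simp_rw [sum_oddPrimesBetween_eq_sum_jacobiSymAway (Dp W) L]
  calc _ ≤ _ := sum_sq_sum_le I B _ (fun p _ ℓ _ => abs_jacobiSymAway_le_one _ _ _)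
        (by positivity) hoff
    _ ≤ 3 * (L / log L) * (3 * (P / log P) + 3 * (L / log L) *
          (12 * (P / log P) / L ^ 4 + c * (2 * L) ^ 3 * (2 * L) ^ 3 * (√P * log P) + 4)) := by
        gcongr
    _ ≤ 600 * (c + 1) * (L / log L * (P / log P) + (L / log L) ^ 2 * L ^ 6 * (√P * log P)) :=
        second_moment_arith (x := L / log L) (y := P / log P) (z := √P * log P) hc.le
          (by positivity) (div_le_self (by linarith) (by linarith))
          (by linarith) (by positivity)
          (one_le_mul_of_one_le_of_one_le (one_le_sqrt.mpr (by linarith : (1 : ℝ) ≤ P)) hlogP)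
    _ = _ := by ring

theorem char_sum_second_moment (W : WeierstrassCurve ℤ) (hΔ : W.Δ ≠ 0)
    (c : ℝ) (hc : 0 < c) :
    ∃ C : ℝ, 0 < C ∧ ∀ L P : ℝ, 3 ≤ L → 3 ≤ P →
      (∀ ℓ₁ ℓ₂ : ℕ, ℓ₁.Prime → ℓ₂.Prime → ℓ₁ ≠ ℓ₂ →
        L ≤ (ℓ₁ : ℝ) → (ℓ₁ : ℝ) ≤ 2 * L → L ≤ (ℓ₂ : ℝ) → (ℓ₂ : ℝ) ≤ 2 * L →
        |(∑ p ∈ goodPrimes W P, (jacobiSym (Dp W p) (ℓ₁ * ℓ₂) : ℝ)) -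
          ((primePi (2 * P) : ℝ) - primePi P) *
            ((if ℓ₁ % 4 = 1 then (1 : ℝ) else -1) / ((ℓ₁ : ℝ) ^ 2 - 1) *
             ((if ℓ₂ % 4 = 1 then (1 : ℝ) else -1) / ((ℓ₂ : ℝ) ^ 2 - 1)))| ≤
          c * (ℓ₁ : ℝ) ^ 3 * (ℓ₂ : ℝ) ^ 3 * Real.sqrt P * Real.log P) →
      ∑ p ∈ goodPrimes W P,
          (∑ ℓ ∈ oddPrimesBetween L p, (jacobiSym (Dp W p) ℓ : ℝ)) ^ 2 ≤
        C * (L * P / (Real.log L * Real.log P) +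
          L ^ 8 * Real.sqrt P * Real.log P / (Real.log L) ^ 2) :=
  char_sum_second_moment_general W c hc

end
end

section
/- For every real c > 0 there exists a real C > 0 such that the following holds for all reals L ≥ 3 and P ≥ 3. Let I(P) denote the set of primes p ∈ [P,2P] with p > 3 and p not dividing Δ_E. Suppose that: (i) for all distinct primes ℓ₁, ℓ₂ ∈ [L,2L], | Σ_{p ∈ I(P)} (D_p/(ℓ₁ℓ₂)) − (π(2P) − π(P))·∏_{i=1}^{2} (−1/ℓᵢ)·(ℓᵢ² − 1)^{−1} | ≤ c·ℓ₁³·ℓ₂³·P^{1/2}·log P; and (ii) for all pairwise distinct primes ℓ₁, ℓ₂, ℓ₃, ℓ₄ ∈ [L,2L], | Σ_{p ∈ I(P)} (D_p/(ℓ₁ℓ₂ℓ₃ℓ₄)) − (π(2P) − π(P))·∏_{i=1}^{4} (−1/ℓᵢ)·(ℓᵢ² − 1)^{−1} | ≤ c·(ℓ₁ℓ₂ℓ₃ℓ₄)³·P^{1/2}·log P. Then Σ_{p ∈ I(P)} ( Σ_{ℓ} (D_p/ℓ) )⁴ ≤ C·( L²·P/((log L)² · log P) + L^{16}·P^{1/2}·(log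 P)/(log L)⁴ ), where the inner sum ranges over all odd primes ℓ ∈ [L,2L] with ℓ ≠ p. -/
open scoped Classical

noncomputable section

/- ### Auxiliary lemmas -/

private lemma one_le_log {x : ℝ} (hx : 3 ≤ x) : 1 ≤ Real.log x := by
  have h1 : Real.exp 1 ≤ x := le_trans (le_of_lt (Real.exp_one_lt_d9.trans_le (by norm_num))) hx
  calc (1:ℝ) = Real.log (Real.exp 1) := (Real.log_exp 1).symm
    _ ≤ Real.log x := Real.log_le_log (Real.exp_pos 1) h1

private lemma log_four_le_two : Real.log 4 ≤ 2 := by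
  have : (4:ℝ) ≤ Real.exp 2 := by
    have h := Real.add_one_le_exp (1:ℝ)
    have h2 : Real.exp 2 = Real.exp 1 * Real.exp 1 := by
      rw [← Real.exp_add]; norm_num
    nlinarith [Real.exp_pos (1:ℝ)]
  calc Real.log 4 ≤ Real.log (Real.exp 2) := Real.log_le_log (by norm_num) this
    _ = 2 := Real.log_exp 2

private lemma cheb {T : Finset ℕ} {x y : ℝ} (hx : 3 ≤ x) (hy : 0 ≤ y)
    (hT : ∀ q ∈ T, q.Prime ∧ x ≤ (q : ℝ) ∧ (q : ℝ) ≤ y) :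
    (T.card : ℝ) ≤ 2 * y / Real.log x := by
  have hlx : 0 < Real.log x := lt_of_lt_of_le one_pos (one_le_log hx)
  rw [le_div_iff₀ hlx]
  have hsub : T ⊆ (Finset.range (⌊y⌋₊ + 1)).filter Nat.Prime := by
    intro q hq
    obtain ⟨hp, _, hqy⟩ := hT q hq
    simp only [Finset.mem_filter, Finset.mem_range]
    exact ⟨Nat.lt_succ_of_le (Nat.le_floor hqy), hp⟩
  have hprod : (∏ q ∈ T, q) ≤ primorial ⌊y⌋₊ := by
    refine Finset.prod_le_prod_of_subset_of_one_le' hsub ?_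
    intro i hi _
    exact Nat.one_le_iff_ne_zero.mpr (Nat.Prime.ne_zero (Finset.mem_filter.mp hi).2)
  have h4 : (∏ q ∈ T, q) ≤ 4 ^ ⌊y⌋₊ := le_trans hprod (primorial_le_4_pow _)
  have hpow : x ^ T.card ≤ ((∏ q ∈ T, q : ℕ) : ℝ) := by
    rw [Nat.cast_prod, ← Finset.prod_const]
    exact Finset.prod_le_prod (fun q _ => by linarith) (fun q hq => (hT q hq).2.1)
  have hcast : ((∏ q ∈ T, q : ℕ) : ℝ) ≤ (4:ℝ) ^ ⌊y⌋₊ := by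
    calc ((∏ q ∈ T, q : ℕ) : ℝ) ≤ ((4 ^ ⌊y⌋₊ : ℕ) : ℝ) := Nat.cast_le.mpr h4
      _ = (4:ℝ) ^ ⌊y⌋₊ := by push_cast; ring
  have hxp : (0:ℝ) < x ^ T.card := by positivity
  have hlog : (T.card : ℝ) * Real.log x ≤ (⌊y⌋₊ : ℝ) * Real.log 4 := by
    calc (T.card : ℝ) * Real.log x = Real.log (x ^ T.card) := (Real.log_pow _ _).symm
      _ ≤ Real.log ((4:ℝ) ^ ⌊y⌋₊) := Real.log_le_log hxp (le_trans hpow hcast)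
      _ = (⌊y⌋₊ : ℝ) * Real.log 4 := Real.log_pow _ _
  have hfl : (⌊y⌋₊ : ℝ) ≤ y := Nat.floor_le hy
  have h4' : (0:ℝ) ≤ (⌊y⌋₊ : ℝ) := Nat.cast_nonneg _
  nlinarith [Real.log_nonneg (by norm_num : (1:ℝ) ≤ 4), log_four_le_two]

private lemma nested_sum_eq (S : Finset ℕ) (f : ℕ → ℝ) :
    ∑ a ∈ S, ∑ b ∈ S.erase a, ∑ e ∈ (S.erase a).erase b,
      ∑ d ∈ ((S.erase a).erase b).erase e, f a * f b * f e * f d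
    = (∑ x ∈ S, f x) ^ 4 - 6 * (∑ x ∈ S, f x ^ 2) * (∑ x ∈ S, f x) ^ 2
      + 3 * (∑ x ∈ S, f x ^ 2) ^ 2 + 8 * (∑ x ∈ S, f x ^ 3) * (∑ x ∈ S, f x)
      - 6 * ∑ x ∈ S, f x ^ 4 := by
  set A := ∑ x ∈ S, f x with hA
  set B := ∑ x ∈ S, f x ^ 2 with hB
  set C := ∑ x ∈ S, f x ^ 3 with hC
  have h1 : ∀ a ∈ S, ∑ b ∈ S.erase a, f b = A - f a :=
    fun a ha => Finset.sum_erase_eq_sub ha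
  have h1' : ∀ a ∈ S, ∀ (k : ℕ), ∑ b ∈ S.erase a, f b ^ k = (∑ x ∈ S, f x ^ k) - f a ^ k :=
    fun a ha k => Finset.sum_erase_eq_sub (f := fun x => f x ^ k) ha
  have h2 : ∀ a ∈ S, ∀ b ∈ S.erase a, ∀ (k : ℕ),
      ∑ e ∈ (S.erase a).erase b, f e ^ k = (∑ x ∈ S, f x ^ k) - f a ^ k - f b ^ k := by
    intro a ha b hb k
    rw [Finset.sum_erase_eq_sub (f := fun x => f x ^ k) hb, h1' a ha k]
  have h2' : ∀ a ∈ S, ∀ b ∈ S.erase a,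
      ∑ e ∈ (S.erase a).erase b, f e = A - f a - f b := by
    intro a ha b hb
    rw [Finset.sum_erase_eq_sub hb, h1 a ha]
  calc ∑ a ∈ S, ∑ b ∈ S.erase a, ∑ e ∈ (S.erase a).erase b,
        ∑ d ∈ ((S.erase a).erase b).erase e, f a * f b * f e * f d
      = ∑ a ∈ S, ∑ b ∈ S.erase a, ∑ e ∈ (S.erase a).erase b,
          f a * f b * f e * (A - f a - f b - f e) := by
        refine Finset.sum_congr rfl fun a ha => Finset.sum_congr rfl fun b hb =>
          Finset.sum_congr rfl fun e he => ?_
        rw [← Finset.mul_sum, Finset.sum_erase_eq_sub he, h2' a ha b hb]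
    _ = ∑ a ∈ S, ∑ b ∈ S.erase a,
          f a * f b * ((A - f a - f b) ^ 2 - ((B - f a ^ 2) - f b ^ 2)) := by
        refine Finset.sum_congr rfl fun a ha => Finset.sum_congr rfl fun b hb => ?_
        have e1 := h2' a ha b hb
        have e2 := h2 a ha b hb 2
        calc ∑ e ∈ (S.erase a).erase b, f a * f b * f e * (A - f a - f b - f e)
            = ∑ e ∈ (S.erase a).erase b,
                ((f a * f b * (A - f a - f b)) * f e - (f a * f b) * f e ^ 2) :=
              Finset.sum_congr rfl fun e _ => by ring
          _ = (f a * f b * (A - f a - f b)) * (∑ e ∈ (S.erase a).erase b, f e)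
              - (f a * f b) * ∑ e ∈ (S.erase a).erase b, f e ^ 2 := by
              rw [Finset.sum_sub_distrib, ← Finset.mul_sum, ← Finset.mul_sum]
          _ = f a * f b * ((A - f a - f b) ^ 2 - ((B - f a ^ 2) - f b ^ 2)) := by
              rw [e1, e2, ← hB]; ring
    _ = ∑ a ∈ S, f a * ((A - f a) ^ 3 - 3 * (A - f a) * (B - f a ^ 2) + 2 * (C - f a ^ 3)) := by
        refine Finset.sum_congr rfl fun a ha => ?_
        have e1 := h1 a ha
        have e2 := h1' a ha 2
        have e3 := h1' a ha 3
        rw [← hB] at e2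
        rw [← hC] at e3
        calc ∑ b ∈ S.erase a, f a * f b * ((A - f a - f b) ^ 2 - ((B - f a ^ 2) - f b ^ 2))
            = ∑ b ∈ S.erase a,
                ((f a * ((A - f a) ^ 2 - (B - f a ^ 2))) * f b
                  - (2 * f a * (A - f a)) * f b ^ 2 + (2 * f a) * f b ^ 3) :=
              Finset.sum_congr rfl fun b _ => by ring
          _ = (f a * ((A - f a) ^ 2 - (B - f a ^ 2))) * (∑ b ∈ S.erase a, f b)
                - (2 * f a * (A - f a)) * (∑ b ∈ S.erase a, f b ^ 2)
                + (2 * f a) * (∑ b ∈ S.erase a, f b ^ 3) := by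
              rw [Finset.sum_add_distrib, Finset.sum_sub_distrib,
                ← Finset.mul_sum, ← Finset.mul_sum, ← Finset.mul_sum]
          _ = f a * ((A - f a) ^ 3 - 3 * (A - f a) * (B - f a ^ 2) + 2 * (C - f a ^ 3)) := by
              rw [e1, e2, e3]; ring
    _ = (A ^ 3 - 3 * A * B + 2 * C) * A + (3 * B - 3 * A ^ 2) * B + 6 * A * C
          - 6 * ∑ x ∈ S, f x ^ 4 := by
        calc ∑ a ∈ S, f a * ((A - f a) ^ 3 - 3 * (A - f a) * (B - f a ^ 2) + 2 * (C - f a ^ 3))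
            = ∑ a ∈ S, ((A ^ 3 - 3 * A * B + 2 * C) * f a + (3 * B - 3 * A ^ 2) * f a ^ 2
                + (6 * A) * f a ^ 3 - 6 * f a ^ 4) :=
              Finset.sum_congr rfl fun a _ => by ring
          _ = (A ^ 3 - 3 * A * B + 2 * C) * A + (3 * B - 3 * A ^ 2) * B + 6 * A * C
                - 6 * ∑ x ∈ S, f x ^ 4 := by
              rw [Finset.sum_sub_distrib, Finset.sum_add_distrib, Finset.sum_add_distrib,
                ← Finset.mul_sum, ← Finset.mul_sum, ← Finset.mul_sum, ← Finset.mul_sum,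
                ← hA, ← hB, ← hC]
    _ = A ^ 4 - 6 * B * A ^ 2 + 3 * B ^ 2 + 8 * C * A - 6 * ∑ x ∈ S, f x ^ 4 := by ring

private lemma sum_le_of_le {E : Finset ℕ} {g : ℕ → ℝ} {m M : ℝ}
    (hEm : (E.card : ℝ) ≤ m) (hM : 0 ≤ M) (hg : ∀ i ∈ E, g i ≤ M) :
    ∑ i ∈ E, g i ≤ m * M := by
  calc ∑ i ∈ E, g i ≤ E.card • M := Finset.sum_le_card_nsmul E g M hg
    _ = (E.card : ℝ) * M := nsmul_eq_mul _ _
    _ ≤ m * M := mul_le_mul_of_nonneg_right hEm hM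

private lemma primePi_facts {P : ℝ} (hP : 3 ≤ P) :
    0 ≤ (primePi (2 * P) : ℝ) - (primePi P : ℝ) ∧
      (primePi (2 * P) : ℝ) - (primePi P : ℝ) ≤ 4 * P / Real.log P := by
  classical
  have hP0 : (0:ℝ) < P := by linarith
  set F : ℝ → Finset ℕ :=
    fun z => (Finset.range (⌊z⌋₊ + 1)).filter (fun q => q.Prime ∧ (q : ℝ) ≤ z) with hF
  have hpi : ∀ z : ℝ, primePi z = (F z).card := by
    intro z
    have hset : {q : ℕ | q.Prime ∧ (q : ℝ) ≤ z} = ↑(F z) := by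
      ext q
      simp only [hF, Set.mem_setOf_eq, Finset.coe_filter, Finset.mem_range, Set.mem_setOf_eq]
      constructor
      · rintro ⟨hq, hqz⟩
        exact ⟨Nat.lt_succ_of_le (Nat.le_floor hqz), hq, hqz⟩
      · rintro ⟨-, hq, hqz⟩
        exact ⟨hq, hqz⟩
    rw [primePi, hset, Set.ncard_coe_finset]
  have hsub : F P ⊆ F (2 * P) := by
    intro q hq
    simp only [hF, Finset.mem_filter, Finset.mem_range] at hq ⊢
    obtain ⟨-, hq1, hq2⟩ := hq
    refine ⟨Nat.lt_succ_of_le (Nat.le_floor (by linarith)), hq1, by linarith⟩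
  have hdiff : (primePi (2 * P) : ℝ) - (primePi P : ℝ) = ((F (2 * P) \ F P).card : ℝ) := by
    rw [hpi, hpi, Finset.card_sdiff_of_subset hsub, Nat.cast_sub (Finset.card_le_card hsub)]
  constructor
  · rw [hdiff]; positivity
  · rw [hdiff]
    have hcheb := cheb (T := F (2 * P) \ F P) (x := P) (y := 2 * P) hP (by linarith) ?_
    · calc ((F (2 * P) \ F P).card : ℝ) ≤ 2 * (2 * P) / Real.log P := hcheb
        _ = 4 * P / Real.log P := by ring
    · intro q hq
      rw [Finset.mem_sdiff] at hq
      obtain ⟨hq2, hq1⟩ := hq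
      simp only [hF, Finset.mem_filter, Finset.mem_range] at hq2 hq1
      obtain ⟨-, hqp, hqle⟩ := hq2
      refine ⟨hqp, ?_, hqle⟩
      by_contra hlt
      push_neg at hlt
      exact hq1 ⟨Nat.lt_succ_of_le (Nat.le_floor hlt.le), hqp, hlt.le⟩

set_option maxHeartbeats 8000000 in
theorem char_sum_fourth_moment (W : WeierstrassCurve ℤ) (hΔ : W.Δ ≠ 0)
    (c : ℝ) (hc : 0 < c) :
    ∃ C : ℝ, 0 < C ∧ ∀ L P : ℝ, 3 ≤ L → 3 ≤ P →
      (∀ ℓ₁ ℓ₂ : ℕ, ℓ₁.Prime → ℓ₂.Prime → ℓ₁ ≠ ℓ₂ →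
        L ≤ (ℓ₁ : ℝ) → (ℓ₁ : ℝ) ≤ 2 * L → L ≤ (ℓ₂ : ℝ) → (ℓ₂ : ℝ) ≤ 2 * L →
        |(∑ p ∈ goodPrimes W P, (jacobiSym (Dp W p) (ℓ₁ * ℓ₂) : ℝ)) -
          ((primePi (2 * P) : ℝ) - primePi P) *
            ((if ℓ₁ % 4 = 1 then (1 : ℝ) else -1) / ((ℓ₁ : ℝ) ^ 2 - 1) *
             ((if ℓ₂ % 4 = 1 then (1 : ℝ) else -1) / ((ℓ₂ : ℝ) ^ 2 - 1)))| ≤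
          c * (ℓ₁ : ℝ) ^ 3 * (ℓ₂ : ℝ) ^ 3 * Real.sqrt P * Real.log P) →
      (∀ ℓ₁ ℓ₂ ℓ₃ ℓ₄ : ℕ, ℓ₁.Prime → ℓ₂.Prime → ℓ₃.Prime → ℓ₄.Prime →
        ℓ₁ ≠ ℓ₂ → ℓ₁ ≠ ℓ₃ → ℓ₁ ≠ ℓ₄ → ℓ₂ ≠ ℓ₃ → ℓ₂ ≠ ℓ₄ → ℓ₃ ≠ ℓ₄ →
        L ≤ (ℓ₁ : ℝ) → (ℓ₁ : ℝ) ≤ 2 * L → L ≤ (ℓ₂ : ℝ) → (ℓ₂ : ℝ) ≤ 2 * L →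
        L ≤ (ℓ₃ : ℝ) → (ℓ₃ : ℝ) ≤ 2 * L → L ≤ (ℓ₄ : ℝ) → (ℓ₄ : ℝ) ≤ 2 * L →
        |(∑ p ∈ goodPrimes W P, (jacobiSym (Dp W p) (ℓ₁ * ℓ₂ * ℓ₃ * ℓ₄) : ℝ)) -
          ((primePi (2 * P) : ℝ) - primePi P) *
            ((if ℓ₁ % 4 = 1 then (1 : ℝ) else -1) / ((ℓ₁ : ℝ) ^ 2 - 1) *
             ((if ℓ₂ % 4 = 1 then (1 : ℝ) else -1) / ((ℓ₂ : ℝ) ^ 2 - 1) *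
              ((if ℓ₃ % 4 = 1 then (1 : ℝ) else -1) / ((ℓ₃ : ℝ) ^ 2 - 1) *
               ((if ℓ₄ % 4 = 1 then (1 : ℝ) else -1) / ((ℓ₄ : ℝ) ^ 2 - 1)))))| ≤
          c * ((ℓ₁ : ℝ) * ℓ₂ * ℓ₃ * ℓ₄) ^ 3 * Real.sqrt P * Real.log P) →
      ∑ p ∈ goodPrimes W P,
          (∑ ℓ ∈ oddPrimesBetween L p, (jacobiSym (Dp W p) ℓ : ℝ)) ^ 4 ≤
        C * (L ^ 2 * P / ((Real.log L) ^ 2 * Real.log P) +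
          L ^ 16 * Real.sqrt P * Real.log P / (Real.log L) ^ 4) := by
  refine ⟨1100000 * (1 + c), by nlinarith, ?_⟩
  intro L P hL hP hyp2 hyp4
  set C : ℝ := 1100000 * (1 + c) with hCdef
  have hC0 : 0 < C := by rw [hCdef]; nlinarith
  have hL0 : (0:ℝ) < L := by linarith
  have hP0 : (0:ℝ) < P := by linarith
  have hlL : 1 ≤ Real.log L := one_le_log hL
  have hlP : 1 ≤ Real.log P := one_le_log hP
  have hlL0 : 0 < Real.log L := by linarith
  have hlP0 : 0 < Real.log P := by linarith
  have hlLle : Real.log L ≤ L := by nlinarith [Real.log_le_sub_one_of_pos hL0]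
  set l := Real.log L with hldef
  set q := Real.log P with hqdef
  set x := Real.sqrt P with hxdef
  have hx0 : 0 ≤ x := Real.sqrt_nonneg P
  have hxP : x ^ 2 = P := Real.sq_sqrt (by linarith)
  have hx1 : 1 ≤ x := by nlinarith
  set T1 := L ^ 2 * P / (l ^ 2 * q) with hT1def
  set T2 := L ^ 16 * x * q / l ^ 4 with hT2def
  have hT1 : 0 ≤ T1 := by rw [hT1def]; positivity
  have hT2 : 0 ≤ T2 := by rw [hT2def]; positivity
  obtain ⟨hΔ0, hΔle⟩ := primePi_facts hP
  -- cardinality of the index sets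
  have hIcard : ((goodPrimes W P).card : ℝ) ≤ 4 * P / q := by
    have := cheb (T := goodPrimes W P) (x := P) (y := 2 * P) hP (by linarith) ?_
    · calc ((goodPrimes W P).card : ℝ) ≤ 2 * (2 * P) / q := this
        _ = 4 * P / q := by ring
    · intro p hp
      simp only [goodPrimes, Finset.mem_filter] at hp
      exact ⟨hp.2.1, hp.2.2.2.2.1, hp.2.2.2.2.2⟩
  have hOcard : ∀ p : ℕ, ((oddPrimesBetween L p).card : ℝ) ≤ 4 * L / l := by
    intro p
    have := cheb (T := oddPrimesBetween L p) (x := L) (y := 2 * L) hL (by linarith) ?_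
    · calc ((oddPrimesBetween L p).card : ℝ) ≤ 2 * (2 * L) / l := this
        _ = 4 * L / l := by ring
    · intro ℓ hℓ
      simp only [oddPrimesBetween, Finset.mem_filter] at hℓ
      exact ⟨hℓ.2.1, hℓ.2.2.2.2.1, hℓ.2.2.2.2.2⟩
  have habs1 : ∀ (p ℓ : ℕ), |((jacobiSym (Dp W p) ℓ : ℤ) : ℝ)| ≤ 1 := by
    intro p ℓ
    rcases jacobiSym.trichotomy (Dp W p) ℓ with h | h | h <;> rw [h] <;> norm_num
  by_cases hPle : P ≤ L ^ 24
  · -- small P : trivial bound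
    clear hyp2 hyp4 hΔ
    have hx12 : x ≤ L ^ 12 := by
      have h := Real.sqrt_le_sqrt hPle
      rwa [show L ^ 24 = (L ^ 12) ^ 2 by ring, Real.sqrt_sq (by positivity), ← hxdef] at h
    have hA4 : ∀ p ∈ goodPrimes W P,
        (∑ ℓ ∈ oddPrimesBetween L p, ((jacobiSym (Dp W p) ℓ : ℤ) : ℝ)) ^ 4
          ≤ (4 * L / l) ^ 4 := by
      intro p _
      have hAle : |∑ ℓ ∈ oddPrimesBetween L p, ((jacobiSym (Dp W p) ℓ : ℤ) : ℝ)| ≤ 4 * L / l := by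
        calc |∑ ℓ ∈ oddPrimesBetween L p, ((jacobiSym (Dp W p) ℓ : ℤ) : ℝ)|
            ≤ ∑ ℓ ∈ oddPrimesBetween L p, |((jacobiSym (Dp W p) ℓ : ℤ) : ℝ)| :=
              Finset.abs_sum_le_sum_abs _ _
          _ ≤ (4 * L / l) * 1 := sum_le_of_le (hOcard p) (by norm_num) (fun ℓ _ => habs1 p ℓ)
          _ = 4 * L / l := mul_one _
      calc (∑ ℓ ∈ oddPrimesBetween L p, ((jacobiSym (Dp W p) ℓ : ℤ) : ℝ)) ^ 4
          = |∑ ℓ ∈ oddPrimesBetween L p, ((jacobiSym (Dp W p) ℓ : ℤ) : ℝ)| ^ 4 := by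
            rw [← abs_pow, abs_of_nonneg (by positivity)]
        _ ≤ (4 * L / l) ^ 4 := pow_le_pow_left₀ (abs_nonneg _) hAle 4
    have hstep : ∑ p ∈ goodPrimes W P,
        (∑ ℓ ∈ oddPrimesBetween L p, ((jacobiSym (Dp W p) ℓ : ℤ) : ℝ)) ^ 4
          ≤ (4 * P / q) * ((4 * L / l) ^ 4) :=
      sum_le_of_le hIcard (by positivity) hA4
    refine le_trans hstep ?_
    have key : (4 * P / q) * ((4 * L / l) ^ 4) ≤ C * T2 := by
      have h1 : (4 * P / q) * ((4 * L / l) ^ 4) = 1024 * (L ^ 4 * P) / (l ^ 4 * q) := by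
        field_simp; ring
      have key2 : 1024 * (L ^ 4 * P) ≤ C * (L ^ 16 * x * q) * q := by
        have hP' : P = x * x := by rw [← hxP]; ring
        have h2 : 1024 * (L ^ 4 * P) = 1024 * L ^ 4 * x * x := by rw [hP']; ring
        have h3 : 1024 * L ^ 4 * x * x ≤ 1024 * L ^ 4 * x * L ^ 12 := by
          have : (0:ℝ) ≤ 1024 * L ^ 4 * x := by positivity
          nlinarith
        have h4 : (1024:ℝ) ≤ C := by rw [hCdef]; nlinarith
        have h5 : 1024 * L ^ 4 * x * L ^ 12 = 1024 * (L ^ 16 * x) := by ring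
        have h6 : 1024 * (L ^ 16 * x) ≤ C * (L ^ 16 * x) := by
          have : (0:ℝ) ≤ L ^ 16 * x := by positivity
          nlinarith
        have h7 : C * (L ^ 16 * x) ≤ C * (L ^ 16 * x) * (q * q) := by
          have hq1 : 1 ≤ q * q := by nlinarith
          have : (0:ℝ) ≤ C * (L ^ 16 * x) := by positivity
          nlinarith
        calc 1024 * (L ^ 4 * P) = 1024 * L ^ 4 * x * x := h2
          _ ≤ 1024 * L ^ 4 * x * L ^ 12 := h3
          _ = 1024 * (L ^ 16 * x) := h5
          _ ≤ C * (L ^ 16 * x) := h6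
          _ ≤ C * (L ^ 16 * x) * (q * q) := h7
          _ = C * (L ^ 16 * x * q) * q := by ring
      rw [h1, hT2def]
      rw [div_le_iff₀ (by positivity : (0:ℝ) < l ^ 4 * q)]
      have hrhs : C * (L ^ 16 * x * q / l ^ 4) * (l ^ 4 * q) = C * (L ^ 16 * x * q) * q := by
        field_simp
      rw [hrhs]
      exact key2
    nlinarith [mul_nonneg hC0.le hT1]
  · -- large P
    push_neg at hPle
    -- `2L < P`, so the inner index set does not depend on `p`
    have hL2 : 2 * L ≤ L ^ 2 := by nlinarith
    have hL224 : L ^ 2 ≤ L ^ 24 := pow_le_pow_right₀ (by linarith) (by norm_num)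
    have h2L : 2 * L < P := by linarith
    set S := oddPrimesBetween L 0 with hS
    have hSrw : ∀ p ∈ goodPrimes W P, oddPrimesBetween L p = S := by
      intro p hp
      have hPp : P ≤ (p : ℝ) := by
        simp only [goodPrimes, Finset.mem_filter] at hp
        exact hp.2.2.2.2.1
      rw [hS]
      ext ℓ
      simp only [oddPrimesBetween, Finset.mem_filter, Finset.mem_range]
      constructor
      · rintro ⟨hr, hpr, hodd, -, h1, h2⟩
        exact ⟨hr, hpr, hodd, Nat.Prime.ne_zero hpr, h1, h2⟩
      · rintro ⟨hr, hpr, hodd, -, h1, h2⟩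
        refine ⟨hr, hpr, hodd, ?_, h1, h2⟩
        intro heq
        rw [heq] at h2
        linarith
    set F : ℕ → ℕ → ℝ := fun p ℓ => ((jacobiSym (Dp W p) ℓ : ℤ) : ℝ) with hF
    have hgoal : ∀ p ∈ goodPrimes W P,
        (∑ ℓ ∈ oddPrimesBetween L p, ((jacobiSym (Dp W p) ℓ : ℤ) : ℝ)) ^ 4
          = (∑ ℓ ∈ S, F p ℓ) ^ 4 := by
      intro p hp
      rw [hSrw p hp]
    rw [Finset.sum_congr rfl hgoal]
    -- basic facts about F
    have hF3 : ∀ p ℓ, F p ℓ ^ 3 = F p ℓ := by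
      intro p ℓ
      rcases jacobiSym.trichotomy (Dp W p) ℓ with h | h | h <;>
        simp only [hF, h] <;> norm_num
    have hF4 : ∀ p ℓ, F p ℓ ^ 4 = F p ℓ ^ 2 := by
      intro p ℓ
      rcases jacobiSym.trichotomy (Dp W p) ℓ with h | h | h <;>
        simp only [hF, h] <;> norm_num
    have hF2 : ∀ p ℓ, F p ℓ ^ 2 ≤ 1 := by
      intro p ℓ
      rcases jacobiSym.trichotomy (Dp W p) ℓ with h | h | h <;>
        simp only [hF, h] <;> norm_num
    have hScard : (S.card : ℝ) ≤ 4 * L / l := hOcard 0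
    have hsub2 : ∀ a, S.erase a ⊆ S := fun a => Finset.erase_subset _ _
    have hsubcard : ∀ T : Finset ℕ, T ⊆ S → (T.card : ℝ) ≤ 4 * L / l :=
      fun T hT => le_trans (Nat.cast_le.mpr (Finset.card_le_card hT)) hScard
    have hSmem : ∀ a ∈ S, a.Prime ∧ L ≤ (a : ℝ) ∧ (a : ℝ) ≤ 2 * L := by
      intro a ha
      rw [hS] at ha
      simp only [oddPrimesBetween, Finset.mem_filter] at ha
      exact ⟨ha.2.1, ha.2.2.2.2.1, ha.2.2.2.2.2⟩
    have hLl0 : (0:ℝ) < 4 * L / l := by positivity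
    -- bound on a single factor of the main term
    have hfac : ∀ u : ℕ, L ≤ (u : ℝ) →
        |(if u % 4 = 1 then (1 : ℝ) else -1) / ((u : ℝ) ^ 2 - 1)| ≤ 2 / L ^ 2 := by
      intro u hu
      have hu2 : (0:ℝ) < (u : ℝ) ^ 2 - 1 := by nlinarith
      have h1 : |(if u % 4 = 1 then (1 : ℝ) else -1)| = 1 := by split_ifs <;> norm_num
      rw [abs_div, h1, abs_of_pos hu2, div_le_div_iff₀ hu2 (by positivity : (0:ℝ) < L ^ 2)]
      nlinarith
    set Δ := (primePi (2 * P) : ℝ) - (primePi P : ℝ) with hΔdef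
    set PB := 16 * P / (q * L ^ 4) + 64 * c * L ^ 6 * x * q with hPBdef
    set QB := 64 * P / (q * L ^ 8) + 4096 * c * L ^ 12 * x * q with hQBdef
    have hPB0 : 0 ≤ PB := by
      rw [hPBdef]
      have : (0:ℝ) ≤ 64 * c * L ^ 6 * x * q := by
        have := hc.le
        positivity
      positivity
    have hQB0 : 0 ≤ QB := by
      rw [hQBdef]
      have : (0:ℝ) ≤ 4096 * c * L ^ 12 * x * q := by
        have := hc.le
        positivity
      positivity
    -- the pair bound, from the first hypothesis
    have hpair : ∀ a ∈ S, ∀ b ∈ S.erase a,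
        |∑ p ∈ goodPrimes W P, F p a * F p b| ≤ PB := by
      intro a ha b hb
      obtain ⟨hbne, hbS⟩ := Finset.mem_erase.mp hb
      obtain ⟨hapr, hLa, haL⟩ := hSmem a ha
      obtain ⟨hbpr, hLb, hbL⟩ := hSmem b hbS
      have hcast : ∀ p : ℕ, F p a * F p b = ((jacobiSym (Dp W p) (a * b) : ℤ) : ℝ) := by
        intro p
        rw [jacobiSym.mul_right' (Dp W p) (Nat.Prime.ne_zero hapr) (Nat.Prime.ne_zero hbpr)]
        simp only [hF]
        push_cast
        ring
      rw [Finset.sum_congr rfl (fun p _ => hcast p)]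
      have hh := hyp2 a b hapr hbpr (Ne.symm hbne) hLa haL hLb hbL
      set M := Δ * ((if a % 4 = 1 then (1 : ℝ) else -1) / ((a : ℝ) ^ 2 - 1) *
        ((if b % 4 = 1 then (1 : ℝ) else -1) / ((b : ℝ) ^ 2 - 1))) with hMdef
      have hM : |M| ≤ 16 * P / (q * L ^ 4) := by
        have hta := hfac a hLa
        have htb := hfac b hLb
        calc |M| = |Δ| * (|(if a % 4 = 1 then (1 : ℝ) else -1) / ((a : ℝ) ^ 2 - 1)| *
              |(if b % 4 = 1 then (1 : ℝ) else -1) / ((b : ℝ) ^ 2 - 1)|) := by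
              rw [hMdef, abs_mul, abs_mul]
          _ ≤ Δ * (2 / L ^ 2 * (2 / L ^ 2)) := by
              rw [abs_of_nonneg hΔ0]
              refine mul_le_mul_of_nonneg_left ?_ hΔ0
              exact mul_le_mul hta htb (abs_nonneg _) (by positivity)
          _ = 4 * Δ / L ^ 4 := by ring
          _ ≤ 4 * (4 * P / q) / L ^ 4 := by gcongr
          _ = 16 * P / (q * L ^ 4) := by ring
      have hE : c * (a : ℝ) ^ 3 * (b : ℝ) ^ 3 * x * q ≤ 64 * c * L ^ 6 * x * q := by
        have ha3 : (a : ℝ) ^ 3 ≤ 8 * L ^ 3 := by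
          calc (a : ℝ) ^ 3 ≤ (2 * L) ^ 3 := pow_le_pow_left₀ (Nat.cast_nonneg a) haL 3
            _ = 8 * L ^ 3 := by ring
        have hb3 : (b : ℝ) ^ 3 ≤ 8 * L ^ 3 := by
          calc (b : ℝ) ^ 3 ≤ (2 * L) ^ 3 := pow_le_pow_left₀ (Nat.cast_nonneg b) hbL 3
            _ = 8 * L ^ 3 := by ring
        have hab : (a : ℝ) ^ 3 * (b : ℝ) ^ 3 ≤ 64 * L ^ 6 := by
          calc (a : ℝ) ^ 3 * (b : ℝ) ^ 3 ≤ (8 * L ^ 3) * (8 * L ^ 3) :=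
              mul_le_mul ha3 hb3 (by positivity) (by positivity)
            _ = 64 * L ^ 6 := by ring
        calc c * (a : ℝ) ^ 3 * (b : ℝ) ^ 3 * x * q
            = ((a : ℝ) ^ 3 * (b : ℝ) ^ 3) * (c * x * q) := by ring
          _ ≤ (64 * L ^ 6) * (c * x * q) := by
              refine mul_le_mul_of_nonneg_right hab ?_
              have := hc.le
              positivity
          _ = 64 * c * L ^ 6 * x * q := by ring
      calc |∑ p ∈ goodPrimes W P, ((jacobiSym (Dp W p) (a * b) : ℤ) : ℝ)|
          = |(∑ p ∈ goodPrimes W P, ((jacobiSym (Dp W p) (a * b) : ℤ) : ℝ) - M) + M| := by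
            rw [sub_add_cancel]
        _ ≤ |∑ p ∈ goodPrimes W P, ((jacobiSym (Dp W p) (a * b) : ℤ) : ℝ) - M| + |M| :=
            abs_add_le _ _
        _ ≤ c * (a : ℝ) ^ 3 * (b : ℝ) ^ 3 * x * q + (16 * P / (q * L ^ 4)) :=
            add_le_add hh hM
        _ ≤ 64 * c * L ^ 6 * x * q + (16 * P / (q * L ^ 4)) := by linarith
        _ = PB := by rw [hPBdef]; ring
    -- the quadruple bound, from the second hypothesis
    have hquad : ∀ a ∈ S, ∀ b ∈ S.erase a, ∀ e ∈ (S.erase a).erase b,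
        ∀ d ∈ ((S.erase a).erase b).erase e,
        |∑ p ∈ goodPrimes W P, F p a * F p b * F p e * F p d| ≤ QB := by
      intro a ha b hb e he d hd
      obtain ⟨hbne, hbS⟩ := Finset.mem_erase.mp hb
      obtain ⟨hene, heS'⟩ := Finset.mem_erase.mp he
      obtain ⟨heane, heS⟩ := Finset.mem_erase.mp heS'
      obtain ⟨hdne, hdS''⟩ := Finset.mem_erase.mp hd
      obtain ⟨hdbne, hdS'⟩ := Finset.mem_erase.mp hdS''
      obtain ⟨hdane, hdS⟩ := Finset.mem_erase.mp hdS'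
      obtain ⟨hapr, hLa, haL⟩ := hSmem a ha
      obtain ⟨hbpr, hLb, hbL⟩ := hSmem b hbS
      obtain ⟨hepr, hLe, heL⟩ := hSmem e heS
      obtain ⟨hdpr, hLd, hdL⟩ := hSmem d hdS
      have ha0 := Nat.Prime.ne_zero hapr
      have hb0 := Nat.Prime.ne_zero hbpr
      have he0 := Nat.Prime.ne_zero hepr
      have hd0 := Nat.Prime.ne_zero hdpr
      have hcast : ∀ p : ℕ, F p a * F p b * F p e * F p d
          = ((jacobiSym (Dp W p) (a * b * e * d) : ℤ) : ℝ) := by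
        intro p
        rw [jacobiSym.mul_right' (Dp W p) (mul_ne_zero (mul_ne_zero ha0 hb0) he0) hd0,
          jacobiSym.mul_right' (Dp W p) (mul_ne_zero ha0 hb0) he0,
          jacobiSym.mul_right' (Dp W p) ha0 hb0]
        simp only [hF]
        push_cast
        ring
      rw [Finset.sum_congr rfl (fun p _ => hcast p)]
      have hh := hyp4 a b e d hapr hbpr hepr hdpr (Ne.symm hbne) (Ne.symm heane)
        (Ne.symm hdane) (Ne.symm hene) (Ne.symm hdbne) (Ne.symm hdne)
        hLa haL hLb hbL hLe heL hLd hdL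
      set M := Δ * ((if a % 4 = 1 then (1 : ℝ) else -1) / ((a : ℝ) ^ 2 - 1) *
        ((if b % 4 = 1 then (1 : ℝ) else -1) / ((b : ℝ) ^ 2 - 1) *
          ((if e % 4 = 1 then (1 : ℝ) else -1) / ((e : ℝ) ^ 2 - 1) *
            ((if d % 4 = 1 then (1 : ℝ) else -1) / ((d : ℝ) ^ 2 - 1))))) with hMdef
      have hM : |M| ≤ 64 * P / (q * L ^ 8) := by
        have hta := hfac a hLa
        have htb := hfac b hLb
        have hte := hfac e hLe
        have htd := hfac d hLd
        have h2L2 : (0:ℝ) ≤ 2 / L ^ 2 := by positivity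
        calc |M| = |Δ| * (|(if a % 4 = 1 then (1 : ℝ) else -1) / ((a : ℝ) ^ 2 - 1)| *
              (|(if b % 4 = 1 then (1 : ℝ) else -1) / ((b : ℝ) ^ 2 - 1)| *
                (|(if e % 4 = 1 then (1 : ℝ) else -1) / ((e : ℝ) ^ 2 - 1)| *
                  |(if d % 4 = 1 then (1 : ℝ) else -1) / ((d : ℝ) ^ 2 - 1)|))) := by
              rw [hMdef, abs_mul, abs_mul, abs_mul, abs_mul]
          _ ≤ Δ * (2 / L ^ 2 * (2 / L ^ 2 * (2 / L ^ 2 * (2 / L ^ 2)))) := by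
              rw [abs_of_nonneg hΔ0]
              refine mul_le_mul_of_nonneg_left ?_ hΔ0
              refine mul_le_mul hta ?_ (by positivity) h2L2
              refine mul_le_mul htb ?_ (by positivity) h2L2
              exact mul_le_mul hte htd (abs_nonneg _) h2L2
          _ = 16 * Δ / L ^ 8 := by ring
          _ ≤ 16 * (4 * P / q) / L ^ 8 := by gcongr
          _ = 64 * P / (q * L ^ 8) := by ring
      have hE : c * ((a : ℝ) * (b : ℝ) * (e : ℝ) * (d : ℝ)) ^ 3 * x * q
          ≤ 4096 * c * L ^ 12 * x * q := by
        have hab : (a : ℝ) * (b : ℝ) ≤ (2 * L) * (2 * L) :=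
          mul_le_mul haL hbL (Nat.cast_nonneg b) (by positivity)
        have habe : (a : ℝ) * (b : ℝ) * (e : ℝ) ≤ (2 * L) * (2 * L) * (2 * L) :=
          mul_le_mul hab heL (Nat.cast_nonneg e) (by positivity)
        have habed : (a : ℝ) * (b : ℝ) * (e : ℝ) * (d : ℝ)
            ≤ (2 * L) * (2 * L) * (2 * L) * (2 * L) :=
          mul_le_mul habe hdL (Nat.cast_nonneg d) (by positivity)
        have hpow : ((a : ℝ) * (b : ℝ) * (e : ℝ) * (d : ℝ)) ^ 3 ≤ 4096 * L ^ 12 := by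
          calc ((a : ℝ) * (b : ℝ) * (e : ℝ) * (d : ℝ)) ^ 3
              ≤ ((2 * L) * (2 * L) * (2 * L) * (2 * L)) ^ 3 :=
                pow_le_pow_left₀ (by positivity) habed 3
            _ = 4096 * L ^ 12 := by ring
        calc c * ((a : ℝ) * (b : ℝ) * (e : ℝ) * (d : ℝ)) ^ 3 * x * q
            = ((a : ℝ) * (b : ℝ) * (e : ℝ) * (d : ℝ)) ^ 3 * (c * x * q) := by ring
          _ ≤ (4096 * L ^ 12) * (c * x * q) := by
              refine mul_le_mul_of_nonneg_right hpow ?_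
              have := hc.le
              positivity
          _ = 4096 * c * L ^ 12 * x * q := by ring
      calc |∑ p ∈ goodPrimes W P, ((jacobiSym (Dp W p) (a * b * e * d) : ℤ) : ℝ)|
          = |(∑ p ∈ goodPrimes W P, ((jacobiSym (Dp W p) (a * b * e * d) : ℤ) : ℝ) - M) + M| := by
            rw [sub_add_cancel]
        _ ≤ |∑ p ∈ goodPrimes W P, ((jacobiSym (Dp W p) (a * b * e * d) : ℤ) : ℝ) - M| + |M| :=
            abs_add_le _ _
        _ ≤ c * ((a : ℝ) * (b : ℝ) * (e : ℝ) * (d : ℝ)) ^ 3 * x * q + (64 * P / (q * L ^ 8)) :=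
            add_le_add hh hM
        _ ≤ 4096 * c * L ^ 12 * x * q + (64 * P / (q * L ^ 8)) := by linarith
        _ = QB := by rw [hQBdef]; ring
    -- pointwise fourth-moment expansion
    have hpoint : ∀ p ∈ goodPrimes W P, (∑ ℓ ∈ S, F p ℓ) ^ 4
        ≤ (∑ a ∈ S, ∑ b ∈ S.erase a, ∑ e ∈ (S.erase a).erase b,
            ∑ d ∈ ((S.erase a).erase b).erase e, F p a * F p b * F p e * F p d)
          + 6 * (4 * L / l) * (∑ ℓ ∈ S, F p ℓ) ^ 2 + 6 * (4 * L / l) := by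
      intro p _
      have hid := nested_sum_eq S (F p)
      have hCsum : ∑ ℓ ∈ S, F p ℓ ^ 3 = ∑ ℓ ∈ S, F p ℓ :=
        Finset.sum_congr rfl fun ℓ _ => hF3 p ℓ
      have hDsum : ∑ ℓ ∈ S, F p ℓ ^ 4 = ∑ ℓ ∈ S, F p ℓ ^ 2 :=
        Finset.sum_congr rfl fun ℓ _ => hF4 p ℓ
      rw [hCsum, hDsum] at hid
      have hBle : ∑ ℓ ∈ S, F p ℓ ^ 2 ≤ 4 * L / l := by
        calc ∑ ℓ ∈ S, F p ℓ ^ 2 ≤ (4 * L / l) * 1 :=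
            sum_le_of_le hScard (by norm_num) (fun ℓ _ => hF2 p ℓ)
          _ = 4 * L / l := mul_one _
      have hB0 : 0 ≤ ∑ ℓ ∈ S, F p ℓ ^ 2 := Finset.sum_nonneg fun ℓ _ => sq_nonneg _
      have hx2 : 0 ≤ (∑ ℓ ∈ S, F p ℓ) ^ 2 := sq_nonneg _
      have hkey : (∑ ℓ ∈ S, F p ℓ ^ 2) * (∑ ℓ ∈ S, F p ℓ) ^ 2
          ≤ (4 * L / l) * (∑ ℓ ∈ S, F p ℓ) ^ 2 := mul_le_mul_of_nonneg_right hBle hx2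
      have hsq2 : 0 ≤ (∑ ℓ ∈ S, F p ℓ ^ 2) ^ 2 := sq_nonneg _
      linarith [hid, hkey, hx2, hsq2, hBle, hB0]
    -- summing the pointwise bound
    have hA2nn : 0 ≤ ∑ p ∈ goodPrimes W P, (∑ ℓ ∈ S, F p ℓ) ^ 2 :=
      Finset.sum_nonneg fun p _ => sq_nonneg _
    have hsum1 : ∑ p ∈ goodPrimes W P, (∑ ℓ ∈ S, F p ℓ) ^ 4
        ≤ (∑ p ∈ goodPrimes W P, ∑ a ∈ S, ∑ b ∈ S.erase a, ∑ e ∈ (S.erase a).erase b,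
            ∑ d ∈ ((S.erase a).erase b).erase e, F p a * F p b * F p e * F p d)
          + 6 * (4 * L / l) * (∑ p ∈ goodPrimes W P, (∑ ℓ ∈ S, F p ℓ) ^ 2)
          + 6 * (4 * L / l) * ((goodPrimes W P).card : ℝ) := by
      have h := Finset.sum_le_sum hpoint
      rw [Finset.sum_add_distrib, Finset.sum_add_distrib, ← Finset.mul_sum,
        Finset.sum_const, nsmul_eq_mul] at h
      linarith
    -- bounding the nested (all-distinct) sum
    have partN : (∑ p ∈ goodPrimes W P, ∑ a ∈ S, ∑ b ∈ S.erase a, ∑ e ∈ (S.erase a).erase b,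
          ∑ d ∈ ((S.erase a).erase b).erase e, F p a * F p b * F p e * F p d)
        ≤ (4 * L / l) * ((4 * L / l) * ((4 * L / l) * ((4 * L / l) * QB))) := by
      rw [Finset.sum_comm]
      refine sum_le_of_le hScard (by positivity) ?_
      intro a ha
      rw [Finset.sum_comm]
      refine sum_le_of_le (hsubcard _ (hsub2 a)) (by positivity) ?_
      intro b hb
      rw [Finset.sum_comm]
      refine sum_le_of_le (hsubcard _ ((Finset.erase_subset _ _).trans (hsub2 a)))
        (by positivity) ?_
      intro e he
      rw [Finset.sum_comm]
      refine sum_le_of_le (hsubcard _ (((Finset.erase_subset _ _).trans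
        (Finset.erase_subset _ _)).trans (hsub2 a))) hQB0 ?_
      intro d hd
      exact le_trans (le_abs_self _) (hquad a ha b hb e he d hd)
    -- bounding the second moment
    have part2 : ∑ p ∈ goodPrimes W P, (∑ ℓ ∈ S, F p ℓ) ^ 2
        ≤ (4 * P / q) * (4 * L / l) + (4 * L / l) * ((4 * L / l) * PB) := by
      have hA2 : ∀ p ∈ goodPrimes W P, (∑ ℓ ∈ S, F p ℓ) ^ 2
          = (∑ ℓ ∈ S, F p ℓ ^ 2) + ∑ a ∈ S, ∑ b ∈ S.erase a, F p a * F p b := by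
        intro p _
        have h1 : (∑ ℓ ∈ S, F p ℓ) ^ 2 = ∑ a ∈ S, F p a * (∑ ℓ ∈ S, F p ℓ) := by
          rw [sq, Finset.sum_mul]
        have h2 : ∀ a ∈ S, F p a * (∑ ℓ ∈ S, F p ℓ)
            = F p a ^ 2 + ∑ b ∈ S.erase a, F p a * F p b := by
          intro a ha
          rw [← Finset.add_sum_erase S (F p) ha, mul_add, Finset.mul_sum, sq]
        rw [h1, Finset.sum_congr rfl h2, Finset.sum_add_distrib]
      rw [Finset.sum_congr rfl hA2, Finset.sum_add_distrib]
      refine add_le_add ?_ ?_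
      · refine sum_le_of_le hIcard (le_of_lt hLl0) ?_
        intro p _
        calc ∑ ℓ ∈ S, F p ℓ ^ 2 ≤ (4 * L / l) * 1 :=
            sum_le_of_le hScard (by norm_num) (fun ℓ _ => hF2 p ℓ)
          _ = 4 * L / l := mul_one _
      · rw [Finset.sum_comm]
        refine sum_le_of_le hScard (by positivity) ?_
        intro a ha
        rw [Finset.sum_comm]
        refine sum_le_of_le (hsubcard _ (hsub2 a)) hPB0 ?_
        intro b hb
        exact le_trans (le_abs_self _) (hpair a ha b hb)
    -- assembling
    have hmid : ∑ p ∈ goodPrimes W P, (∑ ℓ ∈ S, F p ℓ) ^ 4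
        ≤ (4 * L / l) * ((4 * L / l) * ((4 * L / l) * ((4 * L / l) * QB)))
          + 6 * (4 * L / l) * ((4 * P / q) * (4 * L / l) + (4 * L / l) * ((4 * L / l) * PB))
          + 6 * (4 * L / l) * (4 * P / q) := by
      refine le_trans hsum1 ?_
      refine add_le_add (add_le_add partN ?_) ?_
      · exact mul_le_mul_of_nonneg_left part2 (by positivity)
      · exact mul_le_mul_of_nonneg_left hIcard (by positivity)
    refine le_trans hmid ?_
    clear hmid hsum1 partN part2 hpoint hpair hquad hA2nn hgoal hSrw hfac
    clear hyp2 hyp4 hF3 hF4 hF2 hSmem hsubcard hsub2 hScard hOcard hIcard habs1 hΔ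
    -- final numerical comparison
    have hexp : (4 * L / l) * ((4 * L / l) * ((4 * L / l) * ((4 * L / l) * QB)))
          + 6 * (4 * L / l) * ((4 * P / q) * (4 * L / l) + (4 * L / l) * ((4 * L / l) * PB))
          + 6 * (4 * L / l) * (4 * P / q)
        = (4 * L / l) ^ 4 * (64 * P / (q * L ^ 8))
          + (4 * L / l) ^ 4 * (4096 * c * L ^ 12 * x * q)
          + 6 * (4 * L / l) ^ 2 * (4 * P / q)
          + 6 * (4 * L / l) ^ 3 * (16 * P / (q * L ^ 4))
          + 6 * (4 * L / l) ^ 3 * (64 * c * L ^ 6 * x * q)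
          + 6 * (4 * L / l) * (4 * P / q) := by
      rw [hQBdef, hPBdef]; ring
    rw [hexp]
    have e1 : (4 * L / l) ^ 4 * (64 * P / (q * L ^ 8)) ≤ 16384 * T1 := by
      have heq : (4 * L / l) ^ 4 * (64 * P / (q * L ^ 8)) = 16384 * (P / (L ^ 4 * l ^ 4 * q)) := by
        field_simp; ring
      have hone : (1:ℝ) ≤ L ^ 6 * l ^ 2 := by
        have h6 : (1:ℝ) ≤ L ^ 6 := one_le_pow₀ (by linarith)
        have h2 : (1:ℝ) ≤ l ^ 2 := one_le_pow₀ hlL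
        calc (1:ℝ) = 1 * 1 := by norm_num
          _ ≤ L ^ 6 * l ^ 2 := mul_le_mul h6 h2 zero_le_one (by positivity)
      have hle : P / (L ^ 4 * l ^ 4 * q) ≤ L ^ 2 * P / (l ^ 2 * q) := by
        rw [div_le_div_iff₀ (by positivity) (by positivity)]
        calc P * (l ^ 2 * q) = 1 * (P * (l ^ 2 * q)) := (one_mul _).symm
          _ ≤ (L ^ 6 * l ^ 2) * (P * (l ^ 2 * q)) :=
              mul_le_mul_of_nonneg_right hone (by positivity)
          _ = L ^ 2 * P * (L ^ 4 * l ^ 4 * q) := by ring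
      rw [heq, hT1def]
      linarith [mul_le_mul_of_nonneg_left hle (by norm_num : (0:ℝ) ≤ (16384:ℝ))]
    have e2 : (4 * L / l) ^ 4 * (4096 * c * L ^ 12 * x * q) ≤ 1048576 * c * T2 := by
      rw [hT2def]
      have heq : (4 * L / l) ^ 4 * (4096 * c * L ^ 12 * x * q)
          = 1048576 * c * (L ^ 16 * x * q / l ^ 4) := by
        field_simp; ring
      exact le_of_eq heq
    have e3 : 6 * (4 * L / l) ^ 2 * (4 * P / q) ≤ 384 * T1 := by
      rw [hT1def]
      have heq : 6 * (4 * L / l) ^ 2 * (4 * P / q) = 384 * (L ^ 2 * P / (l ^ 2 * q)) := by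
        field_simp; ring
      exact le_of_eq heq
    have e4 : 6 * (4 * L / l) ^ 3 * (16 * P / (q * L ^ 4)) ≤ 6144 * T1 := by
      have heq : 6 * (4 * L / l) ^ 3 * (16 * P / (q * L ^ 4))
          = 6144 * (P / (L * l ^ 3 * q)) := by
        field_simp; ring
      have hone : (1:ℝ) ≤ L ^ 3 * l := by
        have h3 : (1:ℝ) ≤ L ^ 3 := one_le_pow₀ (by linarith)
        calc (1:ℝ) = 1 * 1 := by norm_num
          _ ≤ L ^ 3 * l := mul_le_mul h3 hlL zero_le_one (by positivity)
      have hle : P / (L * l ^ 3 * q) ≤ L ^ 2 * P / (l ^ 2 * q) := by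
        rw [div_le_div_iff₀ (by positivity) (by positivity)]
        calc P * (l ^ 2 * q) = 1 * (P * (l ^ 2 * q)) := (one_mul _).symm
          _ ≤ (L ^ 3 * l) * (P * (l ^ 2 * q)) :=
              mul_le_mul_of_nonneg_right hone (by positivity)
          _ = L ^ 2 * P * (L * l ^ 3 * q) := by ring
      rw [heq, hT1def]
      linarith [mul_le_mul_of_nonneg_left hle (by norm_num : (0:ℝ) ≤ (6144:ℝ))]
    have e5 : 6 * (4 * L / l) ^ 3 * (64 * c * L ^ 6 * x * q) ≤ 24576 * c * T2 := by
      have heq : 6 * (4 * L / l) ^ 3 * (64 * c * L ^ 6 * x * q)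
          = 24576 * c * (L ^ 9 * x * q / l ^ 3) := by
        field_simp; ring
      have hle : L ^ 9 * x * q / l ^ 3 ≤ L ^ 16 * x * q / l ^ 4 := by
        rw [div_le_div_iff₀ (by positivity) (by positivity)]
        have hL7 : l * L ^ 9 ≤ L ^ 16 := by
          calc l * L ^ 9 ≤ L * L ^ 9 := mul_le_mul_of_nonneg_right hlLle (by positivity)
            _ = L ^ 10 := by ring
            _ ≤ L ^ 16 := pow_le_pow_right₀ (by linarith) (by norm_num)
        calc L ^ 9 * x * q * l ^ 4 = (x * q * l ^ 3) * (l * L ^ 9) := by ring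
          _ ≤ (x * q * l ^ 3) * L ^ 16 := by
              refine mul_le_mul_of_nonneg_left hL7 ?_
              positivity
          _ = L ^ 16 * x * q * l ^ 3 := by ring
      rw [heq, hT2def]
      have hc24 : (0:ℝ) ≤ 24576 * c := mul_nonneg (by norm_num) hc.le
      linarith [mul_le_mul_of_nonneg_left hle hc24]
    have e6 : 6 * (4 * L / l) * (4 * P / q) ≤ 96 * T1 := by
      have heq : 6 * (4 * L / l) * (4 * P / q) = 96 * (L * P / (l * q)) := by
        field_simp; ring
      have hle : L * P / (l * q) ≤ L ^ 2 * P / (l ^ 2 * q) := by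
        rw [div_le_div_iff₀ (by positivity) (by positivity)]
        nlinarith [mul_nonneg (mul_nonneg (mul_nonneg hL0.le hP0.le) hlL0.le) hlP0.le,
          sub_nonneg.mpr hlLle,
          mul_nonneg (mul_nonneg (mul_nonneg (mul_nonneg hL0.le hP0.le) hlL0.le) hlP0.le)
            (sub_nonneg.mpr hlLle)]
      rw [heq, hT1def]
      linarith [mul_le_mul_of_nonneg_left hle (by norm_num : (0:ℝ) ≤ (96:ℝ))]
    have hcT2 : 0 ≤ c * T2 := mul_nonneg hc.le hT2
    have hcT1 : 0 ≤ c * T1 := mul_nonneg hc.le hT1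
    have etot := add_le_add (add_le_add (add_le_add (add_le_add (add_le_add e1 e2) e3) e4) e5) e6
    refine le_trans etot ?_
    rw [hCdef]
    nlinarith [hT1, hT2, hcT1, hcT2]

end
end

section
/- For every real A > 0 there exists a real C > 0 with the following property. Let D ≥ 2 be an integer and let L be a real number with L ≥ C·(log D)². If | Σ_{ℓ ≤ L, ℓ an odd prime} (1 − ℓ/L)·(D/ℓ)·log ℓ | ≤ A·L^{1/2}·log D, where (D/ℓ) denotes the Legendre symbol, then the number of odd primes ℓ ≤ L for which (D/ℓ) = 1 (that is, for which D is a nonzero quadratic residue modulo ℓ) is at least L/(5·log L). -/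
/-!
Chebyshev's elementary method: `log N! = ∑_{d ≤ N} Λ(d) ⌊N/d⌋` and
`⌊m⌋ - ⌊m/2⌋ - ⌊m/3⌋ - ⌊m/5⌋ + ⌊m/30⌋ ≤ 1` bound the corresponding combination of log-factorials
by `ψ(N)`, and Stirling's formula evaluates it as `c₀ N - O(log N)` with `c₀ > 0.85`. Since
`ψ - θ = O(√x)`, `θ(x) ≥ 0.85 x` for large `x`, and summing `θ(n)` over `n < L` gives
`∑_{ℓ ≤ L odd prime} (1 - ℓ/L) log ℓ ≥ 0.425 L - O(1)`.

Because `(D/ℓ) ∈ {-1, 0, 1}`, this weighted sum plus the weighted character sum equals twice the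
weight of the residues `(D/ℓ) = 1` plus the weight of the primes `ℓ ∣ D`, which is at most
`log D`. For `L ≥ C (log D)²` the character sum and `log D` are below `0.025 L`, so the residues
have weight at least `L/5`, while each of them weighs at most `log L`.
-/

open Real Finset Filter Asymptotics
open ArithmeticFunction (vonMangoldt_nonneg vonMangoldt_mul_zeta sum_Ioc_mul_zeta_eq_sum)
open scoped ArithmeticFunction.vonMangoldt Nat

theorem mul_log_sub_self_le_of_le {m y : ℝ} (hm : 1 ≤ m) (hmy : m ≤ y) :
    m * log m - m ≤ y * log y - y := by
  have hm0 : 0 < m := by linarith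
  have hy0 : 0 < y := by linarith
  have hquot : log m - log y ≤ m / y - 1 := by
    rw [← log_div hm0.ne' hy0.ne']
    exact log_le_sub_one_of_pos (by positivity)
  have key : y * (log m - log y) ≤ m - y := calc
    _ ≤ y * (m / y - 1) := mul_le_mul_of_nonneg_left hquot hy0.le
    _ = m - y := by field_simp
  nlinarith [log_nonneg hm]

theorem mul_log_sub_self_le_add {m y : ℝ} (hm : 0 < m) (hmy : m ≤ y) :
    y * log y - y ≤ m * log m - m + (y - m) * log y := by
  have hy0 : 0 < y := by linarith
  have hquot : log y - log m ≤ y / m - 1 := by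
    rw [← log_div hy0.ne' hm.ne']
    exact log_le_sub_one_of_pos (by positivity)
  have key : m * (log y - log m) ≤ y - m := calc
    _ ≤ m * (y / m - 1) := mul_le_mul_of_nonneg_left hquot hm.le
    _ = y - m := by field_simp
  linarith

theorem isLittleO_sqrt_id_atTop : sqrt =o[atTop] id := by
  have h1 : (fun _ => (1 : ℝ)) =o[atTop] sqrt := by
    rw [isLittleO_one_left_iff]
    exact tendsto_norm_atTop_atTop.comp tendsto_sqrt_atTop
  refine ((isBigO_refl sqrt atTop).mul_isLittleO h1).congr' ?_ ?_
  · simp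
  · filter_upwards [eventually_ge_atTop 0] with x hx using mul_self_sqrt hx

namespace Stirling

theorem log_factorial_le (n : ℕ) : log (n ! : ℝ) ≤ n * log n - n + log n / 2 + 1 := by
  rcases n with _ | n
  · simp
  have h := stirlingSeq'_antitone (Nat.zero_le n)
  simp only [Function.comp, Nat.succ_eq_add_one, zero_add, stirlingSeq_one] at h
  have hlog := log_le_log (stirlingSeq'_pos n) h
  rw [log_stirlingSeq_formula, log_div (exp_pos 1).ne' (by positivity), log_exp,
    log_mul (by norm_num) (by positivity), log_div (by positivity) (exp_pos 1).ne', log_exp,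
    log_sqrt (by norm_num)] at hlog
  push_cast at hlog ⊢
  linarith

theorem mul_log_sub_self_le_log_factorial (n : ℕ) : n * log n - n ≤ log (n ! : ℝ) := by
  rcases eq_or_ne n 0 with rfl | hn
  · simp
  have h1 : 0 ≤ log (n : ℝ) := log_natCast_nonneg n
  have h2 : 0 ≤ log (2 * π) := log_nonneg (by linarith [pi_gt_three])
  linarith [le_log_factorial_stirling hn]

end Stirling

namespace Chebyshev

theorem log_factorial_eq_sum_log (N : ℕ) : log (N ! : ℝ) = ∑ n ∈ Ioc 0 N, log (n : ℝ) := by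
  induction N with
  | zero => simp
  | succ n ih =>
    rw [Nat.factorial_succ, Nat.cast_mul, log_mul (by positivity) (by positivity), ih,
      sum_Ioc_succ_top (Nat.zero_le n), add_comm]

theorem log_factorial_eq_sum_vonMangoldt (N : ℕ) :
    log (N ! : ℝ) = ∑ d ∈ Ioc 0 N, Λ d * (N / d : ℕ) := by
  rw [← sum_Ioc_mul_zeta_eq_sum, vonMangoldt_mul_zeta, log_factorial_eq_sum_log]
  rfl

theorem log_factorial_div_eq_sum_vonMangoldt (N k : ℕ) :
    log ((N / k)! : ℝ) = ∑ d ∈ Ioc 0 N, Λ d * (N / d / k : ℕ) := by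
  have hcomm (d : ℕ) : N / d / k = N / k / d := by
    rw [Nat.div_div_eq_div_mul, Nat.div_div_eq_div_mul, mul_comm]
  simp_rw [log_factorial_eq_sum_vonMangoldt, hcomm]
  refine sum_subset (Ioc_subset_Ioc_right (Nat.div_le_self N k)) fun d hd hd' => ?_
  simp only [mem_Ioc, not_and, not_le] at hd hd'
  simp [Nat.div_eq_of_lt (hd' hd.1)]

theorem natCast_sub_div_add_div_thirty_le_one (m : ℕ) :
    (m : ℝ) - (m / 2 : ℕ) - (m / 3 : ℕ) - (m / 5 : ℕ) + (m / 30 : ℕ) ≤ 1 := by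
  have h : m + m / 30 ≤ 1 + m / 2 + m / 3 + m / 5 := by omega
  have h' : ((m + m / 30 : ℕ) : ℝ) ≤ (1 + m / 2 + m / 3 + m / 5 : ℕ) := by exact_mod_cast h
  push_cast at h'
  linarith

theorem log_factorial_combination_le_psi (N : ℕ) :
    log (N ! : ℝ) - log ((N / 2)! : ℝ) - log ((N / 3)! : ℝ) - log ((N / 5)! : ℝ)
      + log ((N / 30)! : ℝ) ≤ ψ N := by
  rw [← Nat.div_one N, log_factorial_div_eq_sum_vonMangoldt N 1]
  simp only [log_factorial_div_eq_sum_vonMangoldt, Nat.div_one, psi, Nat.floor_natCast,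
    ← sum_sub_distrib, ← sum_add_distrib]
  refine sum_le_sum fun d _ => ?_
  have := mul_le_mul_of_nonneg_left (natCast_sub_div_add_div_thirty_le_one (N / d))
    (vonMangoldt_nonneg (n := d))
  linarith

theorem log_factorial_div_le (N k : ℕ) (hk : 0 < k) (hkN : k ≤ N) :
    log ((N / k)! : ℝ) ≤ (N / k : ℝ) * log (N / k) - N / k + log N / 2 + 1 := by
  have h1 : (1 : ℝ) ≤ (N / k : ℕ) := by exact_mod_cast (Nat.one_le_div_iff hk).2 hkN
  have hlog : log ((N / k : ℕ) : ℝ) ≤ log N :=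
    log_le_log (by linarith) (by exact_mod_cast Nat.div_le_self N k)
  linarith [Stirling.log_factorial_le (N / k), mul_log_sub_self_le_of_le h1 Nat.cast_div_le]

theorem log_factorial_div_ge (N k : ℕ) (hk : 0 < k) (hkN : k ≤ N) :
    (N / k : ℝ) * log (N / k) - N / k - log N ≤ log ((N / k)! : ℝ) := by
  have h1 : (1 : ℝ) ≤ (N / k : ℕ) := by exact_mod_cast (Nat.one_le_div_iff hk).2 hkN
  have hle : ((N / k : ℕ) : ℝ) ≤ N / k := Nat.cast_div_le
  have hlt : (N / k : ℝ) - 1 < (N / k : ℕ) := by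
    rw [← Nat.floor_div_eq_div (K := ℝ)]
    exact Nat.sub_one_lt_floor _
  have hk1 : (1 : ℝ) ≤ k := by exact_mod_cast hk
  have hlog0 : 0 ≤ log (N / k : ℝ) := log_nonneg (by linarith)
  have hlog : log (N / k : ℝ) ≤ log N :=
    log_le_log (by linarith) (div_le_self (Nat.cast_nonneg N) hk1)
  have hgap : ((N / k : ℝ) - (N / k : ℕ)) * log (N / k : ℝ) ≤ log N := by nlinarith
  linarith [Stirling.mul_log_sub_self_le_log_factorial (N / k),
    mul_log_sub_self_le_add (by linarith) hle]

/-- With `g y = y log y - y`, the combination `g x - g (x/2) - g (x/3) - g (x/5) + g (x/30)`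
equals `chebyshevConst * x`. -/
noncomputable def chebyshevConst : ℝ := log 2 / 2 + log 3 / 3 + log 5 / 5 - log 30 / 30

theorem log_thirty : log (30 : ℝ) = log 2 + log 3 + log 5 := by
  rw [show (30 : ℝ) = 2 * 3 * 5 by norm_num, log_mul (by norm_num) (by norm_num),
    log_mul (by norm_num) (by norm_num)]

theorem lt_chebyshevConst : 0.85 < chebyshevConst := by
  have h3 : 1 ≤ log (3 : ℝ) := by
    rw [le_log_iff_exp_le (by norm_num)]
    linarith [exp_one_lt_d9]
  have h5 : log (4 : ℝ) ≤ log 5 := log_le_log (by norm_num) (by norm_num)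
  rw [show (4 : ℝ) = 2 ^ 2 by norm_num, log_pow] at h5
  rw [chebyshevConst, log_thirty]
  push_cast at h5
  linarith [log_two_gt_d9]

theorem natCast_mul_chebyshevConst_sub_le_psi (N : ℕ) (hN : 30 ≤ N) :
    chebyshevConst * N - (5 / 2 * log N + 3) ≤ ψ N := by
  have h2 := log_factorial_div_le N 2 (by norm_num) (by omega)
  have h3 := log_factorial_div_le N 3 (by norm_num) (by omega)
  have h5 := log_factorial_div_le N 5 (by norm_num) (by omega)
  have h30 := log_factorial_div_ge N 30 (by norm_num) (by omega)
  push_cast at h2 h3 h5 h30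
  have hN0 : (N : ℝ) ≠ 0 := by positivity
  have hmain : (N : ℝ) * log N - N - (N / 2 * log (N / 2) - N / 2)
      - (N / 3 * log (N / 3) - N / 3) - (N / 5 * log (N / 5) - N / 5)
      + (N / 30 * log (N / 30) - N / 30) = chebyshevConst * N := by
    rw [log_div hN0 two_ne_zero, log_div hN0 three_ne_zero, log_div hN0 (by norm_num),
      log_div hN0 (by norm_num), chebyshevConst, log_thirty]
    ring
  linarith [log_factorial_combination_le_psi N, Stirling.mul_log_sub_self_le_log_factorial N]

theorem mul_chebyshevConst_sub_le_psi {x : ℝ} (hx : 30 ≤ x) :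
    chebyshevConst * x - (5 / 2 * log x + 3 + chebyshevConst) ≤ ψ x := by
  have hN : 30 ≤ ⌊x⌋₊ := Nat.le_floor (by exact_mod_cast hx)
  have hfloor : x - 1 < ⌊x⌋₊ := Nat.sub_one_lt_floor x
  have hlog : log ⌊x⌋₊ ≤ log x :=
    log_le_log (by exact_mod_cast (by omega : 0 < ⌊x⌋₊)) (Nat.floor_le (by linarith))
  have hc : 0 ≤ chebyshevConst := by linarith [lt_chebyshevConst]
  rw [psi_eq_psi_coe_floor]
  nlinarith [natCast_mul_chebyshevConst_sub_le_psi ⌊x⌋₊ hN]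

theorem eventually_mul_le_theta {c : ℝ} (hc : c < chebyshevConst) :
    ∀ᶠ x in atTop, c * x ≤ θ x := by
  have herr : (fun x => 5 / 2 * log x + (3 + chebyshevConst) + (ψ x - θ x)) =o[atTop] id :=
    ((isLittleO_log_id_atTop.const_mul_left _).add (isLittleO_const_id_atTop _)).add
      (isBigO_psi_sub_theta_sqrt.trans_isLittleO isLittleO_sqrt_id_atTop)
  filter_upwards [herr.bound (sub_pos.2 hc), eventually_ge_atTop 30] with x hbound hx
  rw [Real.norm_eq_abs, Real.norm_eq_abs, id, abs_of_nonneg (by linarith : 0 ≤ x)] at hbound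
  linarith [mul_chebyshevConst_sub_le_psi hx,
    le_abs_self (5 / 2 * log x + (3 + chebyshevConst) + (ψ x - θ x))]

theorem exists_forall_mul_sub_le_theta {c : ℝ} (hc₀ : 0 ≤ c) (hc : c < chebyshevConst) :
    ∃ K, 0 ≤ K ∧ ∀ x, c * x - K ≤ θ x := by
  obtain ⟨x₀, hx₀⟩ := eventually_atTop.1 (eventually_mul_le_theta hc)
  refine ⟨c * max x₀ 0, by positivity, fun x => ?_⟩
  rcases le_total x₀ x with h | h
  · linarith [hx₀ x h, mul_nonneg hc₀ (le_max_right x₀ 0)]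
  · nlinarith [theta_nonneg x, le_max_left x₀ 0]

theorem sum_range_theta (M : ℕ) :
    ∑ n ∈ range M, θ n = ∑ p ∈ range M with p.Prime, ((M : ℝ) - p) * log p := by
  induction M with
  | zero => simp
  | succ m ih =>
    rw [sum_range_succ, ih, theta_eq_sum_Icc, Nat.floor_natCast, ← Nat.range_succ_eq_Icc_zero,
      Nat.cast_succ]
    simp only [sum_filter, sum_range_succ]
    have hterm (p : ℕ) : (if p.Prime then ((m : ℝ) - p) * log p else 0)
        + (if p.Prime then log p else 0) = if p.Prime then ((m : ℝ) + 1 - p) * log p else 0 := by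
      split_ifs <;> ring
    rw [← sum_congr rfl fun p _ => hterm p, sum_add_distrib]
    split_ifs <;> ring

theorem sum_primes_sub_mul_log_ge {c K : ℝ} (hc : 0 ≤ c) (hK : 0 ≤ K)
    (hθ : ∀ x, c * x - K ≤ θ x) {L : ℝ} (hL : 2 ≤ L) :
    c * L * (L - 3) / 2 - K * L ≤ ∑ p ∈ range (⌊L⌋₊ + 1) with p.Prime, (L - p) * log p := by
  set M := ⌊L⌋₊
  have hML : (M : ℝ) ≤ L := Nat.floor_le (by linarith)
  have hLM : L - 1 < M := Nat.sub_one_lt_floor L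
  have hgauss (m : ℕ) : (∑ n ∈ range m, (n : ℝ)) * 2 = m * (m - 1) := by
    induction m with
    | zero => simp
    | succ m ih => rw [sum_range_succ, add_mul, ih]; push_cast; ring
  have hθsum : c * M * (M - 1) / 2 - K * M ≤ ∑ n ∈ range M, θ n := calc
    _ = ∑ n ∈ range M, (c * n - K) := by
      rw [sum_sub_distrib, ← mul_sum, sum_const, card_range, nsmul_eq_mul,
        show ∑ n ∈ range M, (n : ℝ) = M * (M - 1) / 2 by linarith [hgauss M]]
      ring
    _ ≤ _ := sum_le_sum fun n _ => hθ n
  have hweights : ∑ p ∈ range M with p.Prime, ((M : ℝ) - p) * log p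
      ≤ ∑ p ∈ range (M + 1) with p.Prime, (L - p) * log p := calc
    _ ≤ ∑ p ∈ range M with p.Prime, (L - p) * log p :=
      sum_le_sum fun p _ => mul_le_mul_of_nonneg_right (by linarith) (log_natCast_nonneg p)
    _ ≤ _ := by
      refine sum_le_sum_of_subset_of_nonneg
        (filter_subset_filter _ (range_subset_range.2 M.le_succ)) fun p hp _ => ?_
      have hpM : (p : ℝ) ≤ M := by
        exact_mod_cast Nat.lt_succ_iff.1 (mem_range.1 (mem_filter.1 hp).1)
      exact mul_nonneg (by linarith) (log_natCast_nonneg p)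
  rw [sum_range_theta] at hθsum
  have hquad : (L - 1) * (L - 2) ≤ M * (M - 1) :=
    mul_le_mul hLM.le (by linarith) (by linarith) (by linarith)
  nlinarith [mul_le_mul_of_nonneg_left hquad hc, mul_le_mul_of_nonneg_left hML hK]

end Chebyshev

open Chebyshev

noncomputable def oddPrimesLE (L : ℝ) : Finset ℕ :=
  {ℓ ∈ range (⌊L⌋₊ + 1) | ℓ.Prime ∧ Odd ℓ ∧ (ℓ : ℝ) ≤ L}

theorem sum_primes_weight_le_sum_oddPrimesLE_add_one {L : ℝ} (hL : 2 ≤ L) :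
    ∑ p ∈ range (⌊L⌋₊ + 1) with p.Prime, (1 - (p : ℝ) / L) * log p
      ≤ ∑ ℓ ∈ oddPrimesLE L, (1 - (ℓ : ℝ) / L) * log ℓ + 1 := by
  set P := {p ∈ range (⌊L⌋₊ + 1) | p.Prime}
  have hsplit := sum_filter_add_sum_filter_not P (fun ℓ => Odd ℓ ∧ (ℓ : ℝ) ≤ L)
    (fun ℓ => (1 - (ℓ : ℝ) / L) * log ℓ)
  rw [filter_filter] at hsplit
  have hsub : P.filter (fun ℓ : ℕ => ¬(Odd ℓ ∧ (ℓ : ℝ) ≤ L)) ⊆ {2} := by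
    intro ℓ hℓ
    simp only [P, mem_filter, mem_range] at hℓ
    obtain ⟨⟨hℓM, hℓ⟩, hnot⟩ := hℓ
    have hℓL : (ℓ : ℝ) ≤ L :=
      (Nat.cast_le.2 (Nat.lt_succ_iff.1 hℓM)).trans (Nat.floor_le (by linarith))
    exact mem_singleton.2 (hℓ.eq_two_or_odd'.resolve_right fun h => hnot ⟨h, hℓL⟩)
  have hweight : 0 ≤ 1 - 2 / L ∧ 1 - 2 / L ≤ 1 := by
    constructor
    · rw [sub_nonneg, div_le_one (by linarith)]
      exact hL
    · linarith [div_nonneg zero_le_two (by linarith : 0 ≤ L)]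
  have hlog2 : 0 < log (2 : ℝ) := log_pos one_lt_two
  have htwo : ∑ ℓ ∈ P.filter (fun ℓ : ℕ => ¬(Odd ℓ ∧ (ℓ : ℝ) ≤ L)), (1 - (ℓ : ℝ) / L) * log ℓ
      ≤ 1 := calc
    _ ≤ ∑ ℓ ∈ ({2} : Finset ℕ), (1 - (ℓ : ℝ) / L) * log ℓ := by
      refine sum_le_sum_of_subset_of_nonneg hsub fun ℓ hℓ _ => ?_
      rw [mem_singleton.1 hℓ]
      push_cast
      exact mul_nonneg hweight.1 hlog2.le
    _ ≤ 1 := by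
      rw [sum_singleton]
      push_cast
      nlinarith [log_two_lt_d9]
  unfold oddPrimesLE
  linarith

theorem exists_sum_oddPrimesLE_weight_ge {c : ℝ} (hc₀ : 0 ≤ c) (hc : c < chebyshevConst / 2) :
    ∃ K, 0 ≤ K ∧ ∀ L, 2 ≤ L →
      c * L - K ≤ ∑ ℓ ∈ oddPrimesLE L, (1 - (ℓ : ℝ) / L) * log ℓ := by
  obtain ⟨K, hK, hθ⟩ := exists_forall_mul_sub_le_theta (by linarith : 0 ≤ 2 * c) (by linarith)
  refine ⟨3 * c + K + 1, by positivity, fun L hL => ?_⟩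
  have hdiv : ∑ p ∈ range (⌊L⌋₊ + 1) with p.Prime, (1 - (p : ℝ) / L) * log p
      = (∑ p ∈ range (⌊L⌋₊ + 1) with p.Prime, (L - p) * log p) / L := by
    rw [sum_div]
    exact sum_congr rfl fun p _ => by field_simp
  have hprimes : c * (L - 3) - K
      ≤ ∑ p ∈ range (⌊L⌋₊ + 1) with p.Prime, (1 - (p : ℝ) / L) * log p := by
    rw [hdiv, le_div_iff₀ (by linarith)]
    linarith [sum_primes_sub_mul_log_ge (by linarith) hK hθ hL]
  linarith [sum_primes_weight_le_sum_oddPrimesLE_add_one hL]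

theorem sum_add_sum_mul_eq_of_trichotomy {ι : Type*} (s : Finset ι) (w : ι → ℝ) (χ : ι → ℤ)
    (hχ : ∀ i ∈ s, χ i = 0 ∨ χ i = 1 ∨ χ i = -1) :
    ∑ i ∈ s, w i + ∑ i ∈ s, w i * χ i
      = 2 * ∑ i ∈ s with χ i = 1, w i + ∑ i ∈ s with χ i = 0, w i := by
  rw [← sum_add_distrib, sum_filter, sum_filter, mul_sum, ← sum_add_distrib]
  refine sum_congr rfl fun i hi => ?_
  rcases hχ i hi with h | h | h <;> simp [h, two_mul]

theorem sum_log_le_log_of_prime_dvd {s : Finset ℕ} {n : ℕ} (hn : n ≠ 0)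
    (hs : ∀ p ∈ s, p.Prime ∧ p ∣ n) : ∑ p ∈ s, log (p : ℝ) ≤ log n := by
  have hdvd : ∏ p ∈ s, p ∣ n :=
    prod_primes_dvd n (fun p hp => (hs p hp).1.prime) fun p hp => (hs p hp).2
  rw [← log_prod fun p hp => by exact_mod_cast (hs p hp).1.ne_zero, ← Nat.cast_prod]
  exact log_le_log (by exact_mod_cast Nat.pos_of_dvd_of_pos hdvd (Nat.pos_of_ne_zero hn))
    (by exact_mod_cast Nat.le_of_dvd (Nat.pos_of_ne_zero hn) hdvd)

theorem Nat.Prime.dvd_of_jacobiSym_eq_zero {ℓ : ℕ} (hℓ : ℓ.Prime) {D : ℕ}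
    (h : jacobiSym D ℓ = 0) : ℓ ∣ D := by
  by_contra hdvd
  have hcop : Nat.Coprime D ℓ := ((hℓ.coprime_iff_not_dvd).2 hdvd).symm
  exact (jacobiSym.eq_zero_iff.1 h).2 (by rwa [Int.gcd_natCast_natCast])

theorem sum_oddPrimesLE_weight_le {D : ℕ} (hD : D ≠ 0) {L : ℝ} (hL : 0 < L) :
    ∑ ℓ ∈ oddPrimesLE L, (1 - (ℓ : ℝ) / L) * log ℓ
      ≤ 2 * #{ℓ ∈ oddPrimesLE L | jacobiSym D ℓ = 1} * log L
        + |∑ ℓ ∈ oddPrimesLE L, (1 - (ℓ : ℝ) / L) * (jacobiSym D ℓ : ℝ) * log ℓ| + log D := by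
  have hmem {ℓ : ℕ} (hℓ : ℓ ∈ oddPrimesLE L) :
      ℓ.Prime ∧ (1 - (ℓ : ℝ) / L) * log ℓ ≤ log ℓ ∧ log (ℓ : ℝ) ≤ log L := by
    obtain ⟨-, hp, -, hℓL⟩ := mem_filter.1 hℓ
    have hlog := log_natCast_nonneg ℓ
    refine ⟨hp, ?_, log_le_log (by exact_mod_cast hp.pos) hℓL⟩
    nlinarith [div_nonneg (Nat.cast_nonneg ℓ) hL.le]
  have hsplit := sum_add_sum_mul_eq_of_trichotomy (oddPrimesLE L)
    (fun ℓ => (1 - (ℓ : ℝ) / L) * log ℓ) (fun ℓ => jacobiSym D ℓ)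
    fun ℓ _ => jacobiSym.trichotomy D ℓ
  have hresidue : ∑ ℓ ∈ oddPrimesLE L with jacobiSym D ℓ = 1, (1 - (ℓ : ℝ) / L) * log ℓ
      ≤ #{ℓ ∈ oddPrimesLE L | jacobiSym D ℓ = 1} * log L := by
    rw [← nsmul_eq_mul, ← sum_const]
    exact sum_le_sum fun ℓ hℓ =>
      (hmem (mem_filter.1 hℓ).1).2.1.trans (hmem (mem_filter.1 hℓ).1).2.2
  have hdivisor : ∑ ℓ ∈ oddPrimesLE L with jacobiSym D ℓ = 0, (1 - (ℓ : ℝ) / L) * log ℓ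
      ≤ log D := by
    refine (sum_le_sum fun ℓ hℓ => (hmem (mem_filter.1 hℓ).1).2.1).trans
      (sum_log_le_log_of_prime_dvd hD fun ℓ hℓ => ?_)
    obtain ⟨hℓ, hJ⟩ := mem_filter.1 hℓ
    exact ⟨(hmem hℓ).1, (hmem hℓ).1.dvd_of_jacobiSym_eq_zero hJ⟩
  have hcomm : ∑ ℓ ∈ oddPrimesLE L, (1 - (ℓ : ℝ) / L) * (jacobiSym D ℓ : ℝ) * log ℓ
      = ∑ ℓ ∈ oddPrimesLE L, (1 - (ℓ : ℝ) / L) * log ℓ * (jacobiSym D ℓ : ℝ) :=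
    sum_congr rfl fun ℓ _ => by ring
  rw [hcomm]
  linarith [neg_abs_le (∑ ℓ ∈ oddPrimesLE L, (1 - (ℓ : ℝ) / L) * log ℓ * (jacobiSym D ℓ : ℝ))]

theorem ncard_setOf_jacobiSym_eq_one (D : ℕ) {L : ℝ} (hL : 0 ≤ L) :
    {ℓ : ℕ | ℓ.Prime ∧ Odd ℓ ∧ (ℓ : ℝ) ≤ L ∧ jacobiSym D ℓ = 1}.ncard
      = #{ℓ ∈ oddPrimesLE L | jacobiSym D ℓ = 1} := by
  rw [← Set.ncard_coe_finset]
  congr 1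
  ext ℓ
  simp only [oddPrimesLE, coe_filter, mem_filter, mem_range, Set.mem_ofPred_eq,
    Nat.lt_succ_iff, Nat.le_floor_iff hL]
  tauto

theorem many_quadratic_residue_primes (A : ℝ) (hA : 0 < A) :
    ∃ C : ℝ, 0 < C ∧ ∀ D : ℕ, 2 ≤ D → ∀ L : ℝ, C * (Real.log D) ^ 2 ≤ L →
      |∑ ℓ ∈ (Finset.range (⌊L⌋₊ + 1)).filter
          (fun ℓ : ℕ => ℓ.Prime ∧ Odd ℓ ∧ (ℓ : ℝ) ≤ L),
          (1 - (ℓ : ℝ) / L) * (jacobiSym (D : ℤ) ℓ : ℝ) * Real.log ℓ| ≤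
        A * Real.sqrt L * Real.log D →
      L / (5 * Real.log L) ≤
        ({ℓ : ℕ | ℓ.Prime ∧ Odd ℓ ∧ (ℓ : ℝ) ≤ L ∧ jacobiSym (D : ℤ) ℓ = 1}.ncard : ℝ) := by
  obtain ⟨K, hK, hW⟩ := exists_sum_oddPrimesLE_weight_ge (c := 0.425) (by norm_num)
    (by linarith [lt_chebyshevConst])
  -- `0.425 L` exceeds the required `2 L / 5` by `0.025 L`; this `C` makes both `K` and
  -- `(A + 1) √L log D` at most `L / 80`.
  refine ⟨6400 * (A + 1) ^ 2 + 320 * K, by positivity, fun D hD L hL hsum => ?_⟩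
  have hlogD : 1 / 2 ≤ log (D : ℝ) := by
    linarith [log_two_gt_d9, log_le_log two_pos (by exact_mod_cast hD : (2 : ℝ) ≤ D)]
  have hL₀ : 1600 * (A + 1) ^ 2 + 80 * K ≤ L := by
    have hC : 0 ≤ 6400 * (A + 1) ^ 2 + 320 * K := by positivity
    nlinarith [mul_le_mul_of_nonneg_left (by nlinarith : 1 / 4 ≤ log (D : ℝ) ^ 2) hC]
  have hL₁ : 1600 ≤ L := by nlinarith [sq_nonneg (A + 1)]
  have hsqrt : 80 * (A + 1) * log D ≤ √L := le_sqrt_of_sq_le (by nlinarith)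
  have herr : 80 * ((A + 1) * √L * log D) ≤ L := by
    nlinarith [mul_le_mul_of_nonneg_left hsqrt (sqrt_nonneg L), mul_self_sqrt (by linarith : 0 ≤ L)]
  have hlogD_le : log D ≤ √L * log D :=
    le_mul_of_one_le_left (by linarith) (by rw [one_le_sqrt]; linarith)
  have hlogL : 0 < log L := log_pos (by linarith)
  have hcount := sum_oddPrimesLE_weight_le (D := D) (by omega) (L := L) (by linarith)
  change |∑ ℓ ∈ oddPrimesLE L, _| ≤ _ at hsum
  rw [ncard_setOf_jacobiSym_eq_one D (by linarith), div_le_iff₀ (by positivity)]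
  linarith [hW L (by linarith), sq_nonneg (A + 1)]
end
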